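/- arXiv:1310.2451 — 10 statements merged into one kernel-verified Lean document; each statement's English description precedes it below -/
import Mathlib

section
/- For m > 1 and λ > 0, any minimizer f_Z over H of the m-power regularized least squares objective J lies in the linear span of the feature vectors φ_1, …, φ_n; that is, there exist real coefficients α_1, …, α_n with f_Z = ∑_{i=1}^n α_i φ_i (the representer-theorem form of the solution). -/
/-!
Project a minimizer `f` orthogonally onto the span `K` of the feature vectors. The data term
only sees `⟪φ i, f⟫`, which the projection leaves unchanged, while by Pythagoras
`‖f‖² = ‖P f‖² + ‖f - P f‖²`; since the regularizer is strictly increasing in the norm,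
minimality of `f` forces `‖f‖ = ‖P f‖`, i.e. `f ∈ K`.
-/

open scoped RealInnerProductSpace

namespace Submodule

variable {H : Type*} [NormedAddCommGroup H] [InnerProductSpace ℝ H]

theorem inner_starProjection_right_of_mem (K : Submodule ℝ H) [K.HasOrthogonalProjection]
    {v : H} (hv : v ∈ K) (f : H) : ⟪v, K.starProjection f⟫ = ⟪v, f⟫ := by
  rw [← inner_starProjection_left_eq_right, starProjection_eq_self_iff.mpr hv]

theorem mem_of_forall_le_add_strictMonoOn_norm (K : Submodule ℝ H) [K.HasOrthogonalProjection]
    (L : H → ℝ) (hL : ∀ f, L (K.starProjection f) = L f)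
    {R : ℝ → ℝ} (hR : StrictMonoOn R (Set.Ici 0)) {f : H}
    (hf : ∀ g, L f + R ‖f‖ ≤ L g + R ‖g‖) : f ∈ K := by
  have hRle : R ‖f‖ ≤ R ‖K.starProjection f‖ := by
    simpa only [hL, add_le_add_iff_left] using hf (K.starProjection f)
  have hle : ‖f‖ ≤ ‖K.starProjection f‖ :=
    (hR.le_iff_le (norm_nonneg _) (norm_nonneg _)).mp hRle
  exact (K.mem_iff_norm_starProjection f).mpr (le_antisymm (K.norm_starProjection_apply_le f) hle)

theorem mem_span_range_of_forall_le_add_strictMonoOn_norm {ι : Type*} [Finite ι] (φ : ι → H)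
    (L : (ι → ℝ) → ℝ) {R : ℝ → ℝ} (hR : StrictMonoOn R (Set.Ici 0)) {f : H}
    (hf : ∀ g, L (fun i ↦ ⟪φ i, f⟫) + R ‖f‖ ≤ L (fun i ↦ ⟪φ i, g⟫) + R ‖g‖) :
    f ∈ span ℝ (Set.range φ) := by
  have : FiniteDimensional ℝ (span ℝ (Set.range φ)) :=
    FiniteDimensional.span_of_finite ℝ (Set.finite_range φ)
  refine mem_of_forall_le_add_strictMonoOn_norm _ (fun g ↦ L fun i ↦ ⟪φ i, g⟫) ?_ hR hf
  intro g
  simp only [inner_starProjection_right_of_mem _ (subset_span (Set.mem_range_self _))]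

end Submodule

theorem strictMonoOn_const_mul_rpow {c m : ℝ} (hc : 0 < c) (hm : 0 < m) :
    StrictMonoOn (fun t : ℝ ↦ c * t ^ m) (Set.Ici 0) :=
  fun _ ha _ _ hab ↦ mul_lt_mul_of_pos_left (Real.rpow_lt_rpow ha hab hm) hc

theorem mPower_RLSR_representer_general
    {H : Type*} [NormedAddCommGroup H] [InnerProductSpace ℝ H]
    (n : ℕ) (φ : Fin n → H) (y : Fin n → ℝ)
    (lam m : ℝ) (hlam : 0 < lam) (hm : 1 < m)
    (fZ : H)
    (hmin : ∀ g : H,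
      (1 / (n : ℝ)) * ∑ i, (y i - ⟪φ i, fZ⟫) ^ 2 + lam * ‖fZ‖ ^ m ≤
      (1 / (n : ℝ)) * ∑ i, (y i - ⟪φ i, g⟫) ^ 2 + lam * ‖g‖ ^ m) :
    ∃ α : Fin n → ℝ, fZ = ∑ i, α i • φ i := by
  have hspan : fZ ∈ Submodule.span ℝ (Set.range φ) :=
    Submodule.mem_span_range_of_forall_le_add_strictMonoOn_norm φ
      (fun v ↦ (1 / (n : ℝ)) * ∑ i, (y i - v i) ^ 2)
      (strictMonoOn_const_mul_rpow hlam (zero_lt_one.trans hm)) hmin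
  obtain ⟨α, hα⟩ := (Submodule.mem_span_range_iff_exists_fun ℝ).mp hspan
  exact ⟨α, hα.symm⟩

/-- Representer theorem form: for `m > 1` and `λ > 0`, any minimizer of the m-power
regularized least squares objective lies in the span of the feature vectors
`φ 1, …, φ n`, i.e. it can be written as `∑ i, α i • φ i`. -/
theorem mPower_RLSR_representer
    {H : Type*} [NormedAddCommGroup H] [InnerProductSpace ℝ H] [CompleteSpace H]
    (n : ℕ) (hn : 0 < n) (φ : Fin n → H) (y : Fin n → ℝ)
    (lam m : ℝ) (hlam : 0 < lam) (hm : 1 < m)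
    (fZ : H)
    (hmin : ∀ g : H,
      (1 / (n : ℝ)) * ∑ i, (y i - ⟪φ i, fZ⟫) ^ 2 + lam * ‖fZ‖ ^ m ≤
      (1 / (n : ℝ)) * ∑ i, (y i - ⟪φ i, g⟫) ^ 2 + lam * ‖g‖ ^ m) :
    ∃ α : Fin n → ℝ, fZ = ∑ i, α i • φ i :=
  mPower_RLSR_representer_general n φ y lam m hlam hm fZ hmin
end

section
/- For m > 1 and λ > 0, if f_Z minimizes the m-power regularized least squares objective J over H and f_Z ≠ 0, then f_Z satisfies the first-order stationarity identity λ·m·n·‖f_Z‖^{m−2}·f_Z = ∑_{i=1}^n 2·(y_i − ⟨φ_i, f_Z⟩)·φ_i; equivalently, f_Z = ∑_{i=1}^n [2·(y_i − ⟨φ_i, f_Z⟩)/(λ·m·n·‖f_Z‖^{m−2})]·φ_i. -/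
open scoped RealInnerProductSpace BigOperators

/-! The objective `J` is Fréchet differentiable with derivative `⟪∇J f, ·⟫`, where
`∇J f = λ m ‖f‖^(m-2) f - (1/n) ∑ 2 (yᵢ - ⟪φᵢ, f⟫) φᵢ`; the penalty `‖·‖^m` is differentiable
everywhere because `m > 1`. At a minimizer the derivative vanishes, hence so does `∇J f`, as
`innerSL` is isometric. Multiplying by `n` gives the first identity; dividing by the coefficient,
nonzero since `f ≠ 0`, gives the second. -/

section

variable {H : Type*} [NormedAddCommGroup H] [InnerProductSpace ℝ H]

theorem hasFDerivAt_sq_sub_inner (a : ℝ) (v f : H) :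
    HasFDerivAt (fun g : H => (a - ⟪v, g⟫) ^ 2) (innerSL ℝ ((-(2 * (a - ⟪v, f⟫))) • v)) f := by
  have hres : HasFDerivAt (fun g : H => a - ⟪v, g⟫) (-innerSL ℝ v) f := by
    simpa using ((innerSL ℝ v).hasFDerivAt (x := f)).const_sub a
  refine ((hasDerivAt_pow 2 (a - ⟪v, f⟫)).comp_hasFDerivAt f hres).congr_fderiv ?_
  ext w
  simp

noncomputable def rlsObjective {n : ℕ} (φ : Fin n → H) (y : Fin n → ℝ) (lam m : ℝ) (g : H) : ℝ :=
  (1 / (n : ℝ)) * ∑ i, (y i - ⟪φ i, g⟫) ^ 2 + lam * ‖g‖ ^ m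

theorem hasFDerivAt_rlsObjective {n : ℕ} (φ : Fin n → H) (y : Fin n → ℝ) (lam : ℝ)
    {m : ℝ} (hm : 1 < m) (f : H) :
    HasFDerivAt (rlsObjective φ y lam m)
      (innerSL ℝ ((lam * m * ‖f‖ ^ (m - 2)) • f -
        (1 / (n : ℝ)) • ∑ i, (2 * (y i - ⟪φ i, f⟫)) • φ i)) f := by
  have hloss := (HasFDerivAt.fun_sum fun i (_ : i ∈ Finset.univ) =>
    hasFDerivAt_sq_sub_inner (y i) (φ i) f).const_mul (1 / (n : ℝ))
  refine (hloss.add ((hasFDerivAt_norm_rpow f hm).const_mul lam)).congr_fderiv ?_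
  ext w
  simp [Finset.mul_sum]
  ring

theorem IsLocalMin.rlsGradient_eq_zero {n : ℕ} {φ : Fin n → H} {y : Fin n → ℝ} {lam m : ℝ}
    (hm : 1 < m) {f : H} (hf : IsLocalMin (rlsObjective φ y lam m) f) :
    (lam * m * ‖f‖ ^ (m - 2)) • f - (1 / (n : ℝ)) • ∑ i, (2 * (y i - ⟪φ i, f⟫)) • φ i = 0 := by
  rw [← norm_eq_zero, ← innerSL_apply_norm ℝ,
    hf.hasFDerivAt_eq_zero (hasFDerivAt_rlsObjective φ y lam hm f), norm_zero]

theorem eq_sum_div_smul_of_smul_eq_sum {𝕜 E ι : Type*} [Field 𝕜] [AddCommGroup E] [Module 𝕜 E]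
    {s : Finset ι} {c : 𝕜} (hc : c ≠ 0) {x : E} {a : ι → 𝕜} {v : ι → E}
    (h : c • x = ∑ i ∈ s, a i • v i) : x = ∑ i ∈ s, (a i / c) • v i := by
  rw [← inv_smul_smul₀ hc x, h, Finset.smul_sum]
  simp only [smul_smul, div_eq_inv_mul]

end

theorem mPower_RLSR_stationarity_general
    {H : Type*} [NormedAddCommGroup H] [InnerProductSpace ℝ H]
    (n : ℕ) (hn : 0 < n) (φ : Fin n → H) (y : Fin n → ℝ)
    (lam m : ℝ) (hlam : 0 < lam) (hm : 1 < m)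
    (fZ : H) (hne : fZ ≠ 0)
    (hmin : ∀ g : H,
      (1 / (n : ℝ)) * ∑ i, (y i - ⟪φ i, fZ⟫) ^ 2 + lam * ‖fZ‖ ^ m ≤
      (1 / (n : ℝ)) * ∑ i, (y i - ⟪φ i, g⟫) ^ 2 + lam * ‖g‖ ^ m) :
    (lam * m * n * ‖fZ‖ ^ (m - 2)) • fZ = ∑ i, (2 * (y i - ⟪φ i, fZ⟫)) • φ i ∧
    fZ = ∑ i, (2 * (y i - ⟪φ i, fZ⟫) / (lam * m * n * ‖fZ‖ ^ (m - 2))) • φ i := by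
  have hlocal : IsLocalMin (rlsObjective φ y lam m) fZ := Filter.Eventually.of_forall hmin
  have hgrad := sub_eq_zero.mp (hlocal.rlsGradient_eq_zero hm)
  have hn' : (n : ℝ) ≠ 0 := Nat.cast_ne_zero.mpr hn.ne'
  have hstat : (lam * m * n * ‖fZ‖ ^ (m - 2)) • fZ = ∑ i, (2 * (y i - ⟪φ i, fZ⟫)) • φ i := by
    rw [show lam * m * n * ‖fZ‖ ^ (m - 2) = (n : ℝ) * (lam * m * ‖fZ‖ ^ (m - 2)) by ring,
      mul_smul, hgrad, smul_smul, mul_one_div_cancel hn', one_smul]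
  have hcoeff : lam * m * n * ‖fZ‖ ^ (m - 2) ≠ 0 := by
    have hpow := Real.rpow_pos_of_pos (norm_pos_iff.mpr hne) (m - 2)
    have hn_pos : (0 : ℝ) < n := Nat.cast_pos.mpr hn
    have hm_pos : 0 < m := zero_lt_one.trans hm
    positivity
  exact ⟨hstat, eq_sum_div_smul_of_smul_eq_sum hcoeff hstat⟩

/-- First-order stationarity: for `m > 1` and `λ > 0`, if `fZ` minimizes the m-power
regularized least squares objective over `H` and `fZ ≠ 0`, then
`λ·m·n·‖fZ‖^(m−2) • fZ = ∑ i, 2·(y i − ⟪φ i, fZ⟫) • φ i`; equivalently,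
`fZ = ∑ i, (2·(y i − ⟪φ i, fZ⟫)/(λ·m·n·‖fZ‖^(m−2))) • φ i`. -/
theorem mPower_RLSR_stationarity
    {H : Type*} [NormedAddCommGroup H] [InnerProductSpace ℝ H] [CompleteSpace H]
    (n : ℕ) (hn : 0 < n) (φ : Fin n → H) (y : Fin n → ℝ)
    (lam m : ℝ) (hlam : 0 < lam) (hm : 1 < m)
    (fZ : H) (hne : fZ ≠ 0)
    (hmin : ∀ g : H,
      (1 / (n : ℝ)) * ∑ i, (y i - ⟪φ i, fZ⟫) ^ 2 + lam * ‖fZ‖ ^ m ≤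
      (1 / (n : ℝ)) * ∑ i, (y i - ⟪φ i, g⟫) ^ 2 + lam * ‖g‖ ^ m) :
    (lam * m * n * ‖fZ‖ ^ (m - 2)) • fZ = ∑ i, (2 * (y i - ⟪φ i, fZ⟫)) • φ i ∧
    fZ = ∑ i, (2 * (y i - ⟪φ i, fZ⟫) / (lam * m * n * ‖fZ‖ ^ (m - 2))) • φ i :=
  mPower_RLSR_stationarity_general n hn φ y lam m hlam hm fZ hne hmin
end

section
/- (Theorem 1) Let m > 1 and assume ∑_{i=1}^n d_i·(y'_i)² > 0. For C_0 > 0, define the vector α = Q·α' where α'_i = 2·y'_i/(2·d_i + λ·m·n·C_0) for each 1 ≤ i ≤ n. Then α is a global minimizer of the dual objective G(a) = (Y − K a)ᵀ(Y − K a) + n·λ·(aᵀ K a)^{m/2} if and only if C_0 is a root of the function F, i.e. F(C_0) = (∑_{i=1}^n 4·d_i·(y'_i)²/(2·d_i + λ·m·n·C_0)²)^{m/2 − 1} − C_0 = 0. -/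
open Matrix
open scoped BigOperators

/-!
In the eigenbasis of `K` the objective becomes `∑ (y'ᵢ - dᵢ wᵢ)² + nλ (∑ dᵢ wᵢ²)^{m/2}`,
and the choice of `α'` makes `y' - D α' = (λ m n C₀ / 2) α'`. Along the ray `c ↦ c α'` the
derivative at `c = 1` is `nλ m S (S^{m/2-1} - C₀)` with `S = ∑ dᵢ α'ᵢ² > 0`, which gives
necessity. Conversely, the objective is convex (`u ↦ ‖u‖^m` is convex for `m ≥ 1`), and when
`S^{m/2-1} = C₀` the tangent-line inequality of `‖·‖^m` at `D^{1/2} α'`, together with the exact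
expansion of the quadratic part around `α'`, bounds the objective below by its value at `α'`.
-/

namespace Real

theorem rpow_add_mul_rpow_sub_one_mul_sub_le {s t p : ℝ} (hs : 0 < s) (ht : 0 ≤ t) (hp : 1 ≤ p) :
    s ^ p + p * s ^ (p - 1) * (t - s) ≤ t ^ p := by
  have bernoulli := one_add_mul_self_le_rpow_one_add (s := t / s - 1) (by
    have : 0 ≤ t / s := by positivity
    linarith) hp
  rw [add_sub_cancel, div_rpow ht hs.le, le_div_iff₀ (by positivity)] at bernoulli
  calc s ^ p + p * s ^ (p - 1) * (t - s) = (1 + p * (t / s - 1)) * s ^ p := by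
        rw [rpow_sub_one hs.ne']; field_simp
    _ ≤ t ^ p := bernoulli

/-- The tangent-line inequality of `u ↦ ‖u‖ ^ m` at `v ≠ 0`, with `S = ‖v‖²`, `T = ‖u‖²` and
`W = ⟪v, u⟫`, which enter only through Cauchy–Schwarz `W² ≤ S T`. -/
theorem rpow_half_add_mul_sub_le {S T W m : ℝ} (hS : 0 < S) (hT : 0 ≤ T) (hW : W ^ 2 ≤ S * T)
    (hm : 1 ≤ m) :
    S ^ (m / 2) + m * S ^ (m / 2 - 1) * (W - S) ≤ T ^ (m / 2) := by
  have hs : 0 < √S := sqrt_pos.mpr hS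
  have hWst : W ≤ √S * √T := by
    rw [← sqrt_mul hS.le]; exact le_sqrt_of_sq_le hW
  have hcoef : S ^ (m / 2 - 1) * √S = √S ^ (m - 1) := by
    rw [← rpow_div_two_eq_sqrt _ hS.le, sqrt_eq_rpow, ← rpow_add hS]; ring_nf
  calc S ^ (m / 2) + m * S ^ (m / 2 - 1) * (W - S)
      ≤ S ^ (m / 2) + m * S ^ (m / 2 - 1) * (√S * √T - S) := by gcongr
    _ = √S ^ m + m * √S ^ (m - 1) * (√T - √S) := by
        have hsplit : √S * √T - S = √S * (√T - √S) := by rw [mul_sub, mul_self_sqrt hS.le]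
        rw [hsplit, ← hcoef, ← rpow_div_two_eq_sqrt _ hS.le]
        ring
    _ ≤ √T ^ m := rpow_add_mul_rpow_sub_one_mul_sub_le hs (sqrt_nonneg T) hm
    _ = T ^ (m / 2) := (rpow_div_two_eq_sqrt m hT).symm

end Real

section DualObjective

variable {ι : Type*} [Fintype ι] {d y α : ι → ℝ} {μ m C : ℝ}

noncomputable def dualObjective (K : Matrix ι ι ℝ) (Y : ι → ℝ) (μ m : ℝ) (a : ι → ℝ) : ℝ :=
  (Y - K *ᵥ a) ⬝ᵥ (Y - K *ᵥ a) + μ * (a ⬝ᵥ K *ᵥ a) ^ (m / 2)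

theorem sum_sq_sub_mul_eq_sum_sq_sub_mul_add
    (hstat : ∀ i, 2 * (y i - d i * α i) = μ * m * C * α i) (w : ι → ℝ) :
    ∑ i, (y i - d i * w i) ^ 2 = ∑ i, (y i - d i * α i) ^ 2 + ∑ i, (d i * (α i - w i)) ^ 2
      + μ * m * C * (∑ i, d i * α i ^ 2 - ∑ i, d i * α i * w i) := by
  rw [mul_sub, Finset.mul_sum, Finset.mul_sum, ← Finset.sum_sub_distrib,
    ← Finset.sum_add_distrib, ← Finset.sum_add_distrib]
  refine Finset.sum_congr rfl fun i _ => ?_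
  linear_combination (d i * (α i - w i)) * hstat i

variable [DecidableEq ι] {Q : Matrix ι ι ℝ}

theorem Matrix.mulVec_dotProduct_mulVec_of_transpose_mul_self (hQ : Qᵀ * Q = 1) (x z : ι → ℝ) :
    Q *ᵥ x ⬝ᵥ Q *ᵥ z = x ⬝ᵥ z := by
  rw [dotProduct_mulVec, ← mulVec_transpose, mulVec_mulVec, hQ, one_mulVec]

theorem dualObjective_conj_mulVec (hQ : Qᵀ * Q = 1) (D : Matrix ι ι ℝ) (Y : ι → ℝ) (μ m : ℝ)
    (w : ι → ℝ) :
    dualObjective (Q * D * Qᵀ) Y μ m (Q *ᵥ w) = dualObjective D (Qᵀ *ᵥ Y) μ m w := by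
  have hK : (Q * D * Qᵀ) *ᵥ (Q *ᵥ w) = Q *ᵥ (D *ᵥ w) := by
    rw [mulVec_mulVec, mul_assoc, hQ, mul_one, mulVec_mulVec]
  have hY : Y = Q *ᵥ (Qᵀ *ᵥ Y) := by
    rw [mulVec_mulVec, mul_eq_one_comm.mp hQ, one_mulVec]
  unfold dualObjective
  rw [hK, mulVec_dotProduct_mulVec_of_transpose_mul_self hQ]
  nth_rw 1 [hY]; nth_rw 2 [hY]
  rw [← mulVec_sub, mulVec_dotProduct_mulVec_of_transpose_mul_self hQ]

theorem forall_dualObjective_le_conj_iff (hQ : Qᵀ * Q = 1) {D : Matrix ι ι ℝ} {Y : ι → ℝ}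
    {μ m : ℝ} {w : ι → ℝ} :
    (∀ b, dualObjective (Q * D * Qᵀ) Y μ m (Q *ᵥ w) ≤ dualObjective (Q * D * Qᵀ) Y μ m b) ↔
      ∀ v, dualObjective D (Qᵀ *ᵥ Y) μ m w ≤ dualObjective D (Qᵀ *ᵥ Y) μ m v := by
  simp only [dualObjective_conj_mulVec hQ]
  refine ⟨fun h v => by simpa only [dualObjective_conj_mulVec hQ] using h (Q *ᵥ v), fun h b => ?_⟩
  rw [← one_mulVec b, ← mul_eq_one_comm.mp hQ, ← mulVec_mulVec, dualObjective_conj_mulVec hQ]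
  exact h _

theorem dualObjective_diagonal (d y : ι → ℝ) (μ m : ℝ) (w : ι → ℝ) :
    dualObjective (diagonal d) y μ m w =
      ∑ i, (y i - d i * w i) ^ 2 + μ * (∑ i, d i * w i ^ 2) ^ (m / 2) := by
  have hterm : ∀ i, w i * (d i * w i) = d i * w i ^ 2 := fun i => by ring
  simp only [dualObjective, mulVec_diagonal, dotProduct, Pi.sub_apply, ← sq, hterm]

theorem dualObjective_diagonal_le_of_rpow_eq (hd : ∀ i, 0 ≤ d i) (hμ : 0 ≤ μ) (hm : 1 ≤ m)
    (hstat : ∀ i, 2 * (y i - d i * α i) = μ * m * C * α i) (hS : 0 < ∑ i, d i * α i ^ 2)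
    (hC : (∑ i, d i * α i ^ 2) ^ (m / 2 - 1) = C) (w : ι → ℝ) :
    dualObjective (diagonal d) y μ m α ≤ dualObjective (diagonal d) y μ m w := by
  rw [dualObjective_diagonal, dualObjective_diagonal,
    sum_sq_sub_mul_eq_sum_sq_sub_mul_add hstat w]
  have hT : 0 ≤ ∑ i, d i * w i ^ 2 := Finset.sum_nonneg fun i _ => by have := hd i; positivity
  have hCS : (∑ i, d i * α i * w i) ^ 2 ≤ (∑ i, d i * α i ^ 2) * ∑ i, d i * w i ^ 2 :=
    Finset.sum_sq_le_sum_mul_sum_of_sq_le_mul _ (fun i _ => by have := hd i; positivity)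
      (fun i _ => by have := hd i; positivity) (fun i _ => le_of_eq (by ring))
  have htangent := Real.rpow_half_add_mul_sub_le hS hT hCS hm
  rw [hC] at htangent
  have hsq : 0 ≤ ∑ i, (d i * (α i - w i)) ^ 2 := Finset.sum_nonneg fun i _ => sq_nonneg _
  nlinarith [mul_le_mul_of_nonneg_left htangent hμ]

theorem rpow_eq_of_forall_dualObjective_diagonal_le (hμ : μ ≠ 0) (hm : m ≠ 0)
    (hstat : ∀ i, 2 * (y i - d i * α i) = μ * m * C * α i) (hS : 0 < ∑ i, d i * α i ^ 2)
    (hmin : ∀ w, dualObjective (diagonal d) y μ m α ≤ dualObjective (diagonal d) y μ m w) :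
    (∑ i, d i * α i ^ 2) ^ (m / 2 - 1) = C := by
  set S := ∑ i, d i * α i ^ 2
  have hray : ∀ c : ℝ, dualObjective (diagonal d) y μ m (c • α) =
      ∑ i, (y i - c * (d i * α i)) ^ 2 + μ * (c ^ 2 * S) ^ (m / 2) := by
    intro c
    have hterm : ∀ i, y i - d i * (c * α i) = y i - c * (d i * α i) := fun i => by ring
    have hnorm : ∀ i, d i * (c * α i) ^ 2 = c ^ 2 * (d i * α i ^ 2) := fun i => by ring
    simp only [dualObjective_diagonal, Pi.smul_apply, smul_eq_mul, S, Finset.mul_sum, hterm, hnorm]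
  have hquad : HasDerivAt (fun c : ℝ => ∑ i, (y i - c * (d i * α i)) ^ 2) (-(μ * m * C * S)) 1 := by
    refine (HasDerivAt.fun_sum (u := Finset.univ) fun i _ =>
      (((hasDerivAt_id (1 : ℝ)).mul_const (d i * α i)).const_sub (y i)).pow 2).congr_deriv ?_
    simp only [S, Finset.mul_sum, ← Finset.sum_neg_distrib]
    refine Finset.sum_congr rfl fun i _ => ?_
    rw [id_eq]
    linear_combination (-(d i * α i)) * hstat i
  have hreg : HasDerivAt (fun c : ℝ => μ * (c ^ 2 * S) ^ (m / 2))
      (μ * (m * S ^ (m / 2 - 1) * S)) 1 := by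
    refine ((((hasDerivAt_pow 2 (1 : ℝ)).mul_const S).rpow_const (p := m / 2)
      (Or.inl (by simp [hS.ne']))).const_mul μ).congr_deriv ?_
    simp only [one_pow, one_mul, Nat.cast_ofNat]
    ring
  have hloc : IsLocalMin (fun c : ℝ => dualObjective (diagonal d) y μ m (c • α)) 1 :=
    Filter.Eventually.of_forall fun c => by simpa only [one_smul] using hmin (c • α)
  simp only [hray] at hloc
  have hderiv := hloc.hasDerivAt_eq_zero (hquad.add hreg)
  have hfactor : μ * m * S * (S ^ (m / 2 - 1) - C) = 0 := by linear_combination hderiv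
  have hne : μ * m * S ≠ 0 := by positivity
  exact sub_eq_zero.mp ((mul_eq_zero.mp hfactor).resolve_left hne)

theorem forall_dualObjective_diagonal_le_iff (hd : ∀ i, 0 ≤ d i) (hμ : 0 < μ) (hm : 1 ≤ m)
    (hstat : ∀ i, 2 * (y i - d i * α i) = μ * m * C * α i) (hS : 0 < ∑ i, d i * α i ^ 2) :
    (∀ w, dualObjective (diagonal d) y μ m α ≤ dualObjective (diagonal d) y μ m w) ↔
      (∑ i, d i * α i ^ 2) ^ (m / 2 - 1) = C :=
  ⟨rpow_eq_of_forall_dualObjective_diagonal_le hμ.ne' (by positivity) hstat hS,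
    dualObjective_diagonal_le_of_rpow_eq hd hμ.le hm hstat hS⟩

end DualObjective

/-- Theorem 1: with `K = Q D Qᵀ` (Q orthogonal, D = diagonal d ≥ 0), `y' = Qᵀ Y`,
`m > 1`, `∑ d i (y' i)² > 0`, `C₀ > 0`, and `α = Q α'` where
`α' i = 2 y' i / (2 d i + λ m n C₀)`, the vector `α` is a global minimizer of the dual
objective `G(a) = (Y − K a)ᵀ (Y − K a) + n λ (aᵀ K a)^{m/2}` if and only if
`F(C₀) = (∑ i, 4 d i (y' i)² / (2 d i + λ m n C₀)²)^{m/2 − 1} − C₀ = 0`. -/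
theorem mPower_RLSR_dual_solution
    (n : ℕ) (hn : 0 < n)
    (K Q : Matrix (Fin n) (Fin n) ℝ) (d : Fin n → ℝ) (Y : Fin n → ℝ)
    (lam m : ℝ) (hlam : 0 < lam) (hm : 1 < m)
    (hQ : Qᵀ * Q = 1) (hK : K = Q * Matrix.diagonal d * Qᵀ) (hd : ∀ i, 0 ≤ d i)
    (y' : Fin n → ℝ) (hy' : y' = Qᵀ.mulVec Y)
    (hpos : 0 < ∑ i, d i * (y' i) ^ 2)
    (C₀ : ℝ) (hC₀ : 0 < C₀)
    (α' : Fin n → ℝ) (hα' : ∀ i, α' i = 2 * y' i / (2 * d i + lam * m * n * C₀))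
    (α : Fin n → ℝ) (hα : α = Q.mulVec α') :
    (∀ b : Fin n → ℝ,
        (Y - K.mulVec α) ⬝ᵥ (Y - K.mulVec α) + n * lam * (α ⬝ᵥ K.mulVec α) ^ (m / 2) ≤
        (Y - K.mulVec b) ⬝ᵥ (Y - K.mulVec b) + n * lam * (b ⬝ᵥ K.mulVec b) ^ (m / 2)) ↔
    (∑ i, 4 * d i * (y' i) ^ 2 / (2 * d i + lam * m * n * C₀) ^ 2) ^ (m / 2 - 1) - C₀ = 0 := by
  have hμ : 0 < (n : ℝ) * lam := by positivity
  have hden : ∀ i, 0 < 2 * d i + lam * m * n * C₀ := fun i => by have := hd i; positivity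
  have hstat : ∀ i, 2 * (y' i - d i * α' i) = n * lam * m * C₀ * α' i := fun i => by
    rw [hα' i]; field_simp [(hden i).ne']; ring
  have hS : ∑ i, 4 * d i * (y' i) ^ 2 / (2 * d i + lam * m * n * C₀) ^ 2 =
      ∑ i, d i * α' i ^ 2 :=
    Finset.sum_congr rfl fun i _ => by rw [hα' i, div_pow]; field_simp; ring
  have hSpos : 0 < ∑ i, d i * α' i ^ 2 := by
    obtain ⟨i, -, hi⟩ := Finset.exists_lt_of_sum_lt (s := Finset.univ) (f := fun _ => (0 : ℝ))
      (by simpa using hpos)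
    rw [← hS]
    exact Finset.sum_pos' (fun j _ => by have := hd j; positivity)
      ⟨i, Finset.mem_univ i, div_pos (by linarith) (pow_pos (hden i) 2)⟩
  subst hK hy' hα
  -- the left-hand side is `∀ b, G α ≤ G b` for `G = dualObjective K Y (n * lam) m`
  rw [hS, sub_eq_zero, ← forall_dualObjective_diagonal_le_iff hd hμ hm.le hstat hSpos]
  exact forall_dualObjective_le_conj_iff hQ
end

section
/- Let m > 1 and assume ∑_{i=1}^n d_i·(y'_i)² > 0. Then the function F(C) = (∑_{i=1}^n 4·d_i·(y'_i)²/(2·d_i + λ·m·n·C)²)^{m/2 − 1} − C has exactly one root C_0 in (0, ∞); moreover F is positive near 0 and F(C) → −∞ as C → ∞. -/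
/-!
Write `S` for the sum inside `F`, so that `F C = S C ^ e - C` with `e = m/2 - 1 > -1/2`.
`S` is positive and continuous on `[0, ∞)`, decreasing, while `C² S C` is increasing. Hence
`G C = S C ^ e / C` is strictly decreasing on `(0, ∞)`: for `e ≥ 0` both factors `S C ^ e` and
`1 / C` decrease, and for `e < 0` one writes `G C = (C² S C) ^ e * C ^ (-(2e + 1))`. The positive
roots of `F = C (G - 1)` are the solutions of `G C = 1`, so there is at most one. The same
factorisations give `G C → 0` as `C → ∞`, hence `F → -∞`, while `F C → S 0 ^ e > 0` as `C → 0⁺`;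
the intermediate value theorem provides the root.
-/

open Filter Set
open scoped Matrix Topology

lemma rpow_div_self_eq_sq_mul_rpow_mul {C s : ℝ} (hC : 0 < C) (hs : 0 ≤ s) (e : ℝ) :
    s ^ e / C = (C ^ 2 * s) ^ e * C ^ (-(2 * e + 1)) := by
  rw [Real.mul_rpow (by positivity) hs, ← Real.rpow_natCast_mul hC.le, mul_right_comm,
    ← Real.rpow_add hC]
  norm_num [Real.rpow_neg_one, div_eq_mul_inv, mul_comm]

section RpowSubSelf

variable {S : ℝ → ℝ} {e : ℝ}

theorem strictAntiOn_rpow_div_self (he : -1 / 2 < e) (hpos : ∀ C ∈ Ioi (0 : ℝ), 0 < S C)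
    (hanti : AntitoneOn S (Ioi 0)) (hmono : MonotoneOn (fun C => C ^ 2 * S C) (Ioi 0)) :
    StrictAntiOn (fun C => S C ^ e / C) (Ioi 0) := by
  intro x hx y hy hxy
  have hx' : (0 : ℝ) < x := hx
  rcases le_or_gt 0 e with he0 | he0
  · calc S y ^ e / y ≤ S x ^ e / y := div_le_div_of_nonneg_right
          (Real.rpow_le_rpow (hpos y hy).le (hanti hx hy hxy.le) he0) (hx'.trans hxy).le
      _ < S x ^ e / x := div_lt_div_of_pos_left (Real.rpow_pos_of_pos (hpos x hx) e) hx' hxy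
  · simp only [rpow_div_self_eq_sq_mul_rpow_mul hx' (hpos x hx).le,
      rpow_div_self_eq_sq_mul_rpow_mul (hx'.trans hxy) (hpos y hy).le]
    refine mul_lt_mul' (Real.rpow_le_rpow_of_nonpos (by have := hpos x hx; positivity)
      (hmono hx hy hxy.le) he0.le) (Real.rpow_lt_rpow_of_neg hx' hxy (by linarith))
      (Real.rpow_pos_of_pos (hx'.trans hxy) _).le (by have := hpos x hx; positivity)

theorem tendsto_rpow_div_self_atTop (he : -1 / 2 < e) (hpos : ∀ C ∈ Ioi (0 : ℝ), 0 < S C)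
    (hanti : AntitoneOn S (Ioi 0)) (hmono : MonotoneOn (fun C => C ^ 2 * S C) (Ioi 0)) :
    Tendsto (fun C => S C ^ e / C) atTop (𝓝 0) := by
  have hS1 := hpos 1 (mem_Ioi.2 one_pos)
  have hnonneg : ∀ᶠ C in atTop, 0 ≤ S C ^ e / C := by
    filter_upwards [eventually_gt_atTop 0] with C hC
    have := hpos C hC
    positivity
  rcases le_or_gt 0 e with he0 | he0
  · refine tendsto_of_tendsto_of_tendsto_of_le_of_le' tendsto_const_nhds
      (tendsto_const_nhds.div_atTop tendsto_id : Tendsto (fun C : ℝ => S 1 ^ e / C) atTop _)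
      hnonneg ?_
    filter_upwards [eventually_ge_atTop 1] with C hC
    have hC0 : (0 : ℝ) < C := one_pos.trans_le hC
    exact div_le_div_of_nonneg_right
      (Real.rpow_le_rpow (hpos C hC0).le (hanti (mem_Ioi.2 one_pos) hC0 hC) he0) hC0.le
  · have hdecay : Tendsto (fun C : ℝ => S 1 ^ e * C ^ (-(2 * e + 1))) atTop (𝓝 0) := by
      simpa using (tendsto_rpow_neg_atTop (by linarith : 0 < 2 * e + 1)).const_mul (S 1 ^ e)
    refine tendsto_of_tendsto_of_tendsto_of_le_of_le' tendsto_const_nhds hdecay hnonneg ?_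
    filter_upwards [eventually_ge_atTop 1] with C hC
    have hC0 : (0 : ℝ) < C := one_pos.trans_le hC
    have hmono1 := hmono (mem_Ioi.2 one_pos) hC0 hC
    simp only [one_pow, one_mul] at hmono1
    rw [rpow_div_self_eq_sq_mul_rpow_mul hC0 (hpos C hC0).le]
    exact mul_le_mul_of_nonneg_right (Real.rpow_le_rpow_of_nonpos hS1 hmono1 he0.le)
      (Real.rpow_nonneg hC0.le _)

theorem tendsto_rpow_sub_self_atBot (he : -1 / 2 < e) (hpos : ∀ C ∈ Ioi (0 : ℝ), 0 < S C)
    (hanti : AntitoneOn S (Ioi 0)) (hmono : MonotoneOn (fun C => C ^ 2 * S C) (Ioi 0)) :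
    Tendsto (fun C => S C ^ e - C) atTop atBot := by
  have hlim : Tendsto (fun C => S C ^ e / C - 1) atTop (𝓝 (-1)) := by
    simpa using (tendsto_rpow_div_self_atTop he hpos hanti hmono).sub_const 1
  refine (tendsto_id.atTop_mul_neg (by norm_num) hlim).congr' ?_
  filter_upwards [eventually_gt_atTop 0] with C hC
  rw [id, mul_sub, mul_div_cancel₀ _ hC.ne', mul_one]

theorem tendsto_rpow_sub_self_nhdsGT (hcont : ContinuousWithinAt S (Ioi 0) 0) (h0 : 0 < S 0) :
    Tendsto (fun C => S C ^ e - C) (𝓝[>] 0) (𝓝 (S 0 ^ e)) := by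
  simpa using (hcont.rpow_const (p := e) (Or.inl h0.ne')).tendsto.sub
    (tendsto_id.mono_left nhdsWithin_le_nhds)

theorem existsUnique_rpow_sub_self_eq_zero (he : -1 / 2 < e) (hcont : ContinuousOn S (Ici 0))
    (hpos : ∀ C ∈ Ici (0 : ℝ), 0 < S C) (hanti : AntitoneOn S (Ioi 0))
    (hmono : MonotoneOn (fun C => C ^ 2 * S C) (Ioi 0)) :
    ∃! C₀ : ℝ, C₀ ∈ Ioi 0 ∧ S C₀ ^ e - C₀ = 0 := by
  have hpos' : ∀ C ∈ Ioi (0 : ℝ), 0 < S C := fun C hC => hpos C (Ioi_subset_Ici_self hC)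
  have hcontF : ContinuousOn (fun C => S C ^ e - C) (Ioi 0) :=
    ((hcont.mono Ioi_subset_Ici_self).rpow_const fun C hC => Or.inl (hpos' C hC).ne').sub
      continuousOn_id
  obtain ⟨C₀, hC₀, hFC₀⟩ : (0 : ℝ) ∈ (fun C => S C ^ e - C) '' Ioi 0 :=
    isPreconnected_Ioi.intermediate_value_Iio (l₂ := 𝓝[>] 0)
      (le_principal_iff.2 (Ioi_mem_atTop 0)) inf_le_right hcontF
      (tendsto_rpow_sub_self_atBot he hpos' hanti hmono)
      (tendsto_rpow_sub_self_nhdsGT (hcont 0 self_mem_Ici |>.mono Ioi_subset_Ici_self)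
        (hpos 0 self_mem_Ici))
      (Real.rpow_pos_of_pos (hpos 0 self_mem_Ici) e)
  have hroot : ∀ C ∈ Ioi (0 : ℝ), S C ^ e - C = 0 ↔ S C ^ e / C = 1 := fun C hC => by
    rw [sub_eq_zero, div_eq_one_iff_eq (ne_of_gt hC)]
  refine ⟨C₀, ⟨hC₀, hFC₀⟩, fun C ⟨hC, hFC⟩ => ?_⟩
  exact (strictAntiOn_rpow_div_self he hpos' hanti hmono).injOn hC hC₀
    (((hroot C hC).1 hFC).trans ((hroot C₀ hC₀).1 hFC₀).symm)

end RpowSubSelf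

/-- `aᵀ K a` at the stationary point `a = 2 (2 K + c C)⁻¹ Y` of the dual objective, written in the
eigenbasis of `K`; with `c = λ m n`, the stationarity condition reads `C = (aᵀ K a) ^ (m/2 - 1)`. -/
noncomputable def penaltyNormSq {ι : Type*} [Fintype ι] (d y : ι → ℝ) (c C : ℝ) : ℝ :=
  ∑ i, 4 * d i * y i ^ 2 / (2 * d i + c * C) ^ 2

section PenaltyNormSq

variable {ι : Type*} [Fintype ι] {d y : ι → ℝ} {c : ℝ}

theorem penaltyNormSq_pos (hd : ∀ i, 0 ≤ d i) (hc : 0 ≤ c) (hdy : 0 < ∑ i, d i * y i ^ 2)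
    {C : ℝ} (hC : 0 ≤ C) : 0 < penaltyNormSq d y c C := by
  obtain ⟨i, -, hi⟩ := Finset.exists_lt_of_sum_lt (by simpa using hdy : ∑ _i : ι, (0 : ℝ) < _)
  have hdi : 0 < d i := (hd i).lt_of_ne fun h => by simp [← h] at hi
  refine Finset.sum_pos' (fun j _ => by have := hd j; positivity) ⟨i, Finset.mem_univ _, ?_⟩
  have hden : 0 < 2 * d i + c * C := by positivity
  exact div_pos (by linarith) (by positivity)

theorem antitoneOn_penaltyNormSq (hd : ∀ i, 0 ≤ d i) (hc : 0 < c) :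
    AntitoneOn (penaltyNormSq d y c) (Ioi 0) := by
  intro x (hx : 0 < x) z (hz : 0 < z) hxz
  refine Finset.sum_le_sum fun i _ => ?_
  have := hd i
  exact div_le_div_of_nonneg_left (by positivity) (by positivity)
    (pow_le_pow_left₀ (by positivity) (by gcongr) 2)

theorem monotoneOn_sq_mul_penaltyNormSq (hd : ∀ i, 0 ≤ d i) (hc : 0 < c) :
    MonotoneOn (fun C => C ^ 2 * penaltyNormSq d y c C) (Ioi 0) := by
  intro x (hx : 0 < x) z (hz : 0 < z) hxz
  simp only [penaltyNormSq, Finset.mul_sum]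
  refine Finset.sum_le_sum fun i _ => ?_
  have := hd i
  have hratio : x / (2 * d i + c * x) ≤ z / (2 * d i + c * z) := by
    rw [div_le_div_iff₀ (by positivity) (by positivity)]
    nlinarith [mul_le_mul_of_nonneg_left hxz this]
  calc x ^ 2 * (4 * d i * y i ^ 2 / (2 * d i + c * x) ^ 2)
      = 4 * d i * y i ^ 2 * (x / (2 * d i + c * x)) ^ 2 := by rw [div_pow]; ring
    _ ≤ 4 * d i * y i ^ 2 * (z / (2 * d i + c * z)) ^ 2 := by gcongr
    _ = z ^ 2 * (4 * d i * y i ^ 2 / (2 * d i + c * z) ^ 2) := by rw [div_pow]; ring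

theorem continuousOn_penaltyNormSq (hd : ∀ i, 0 ≤ d i) (hc : 0 ≤ c) :
    ContinuousOn (penaltyNormSq d y c) (Ici 0) := by
  refine continuousOn_finsetSum _ fun i _ => ?_
  rcases (hd i).eq_or_lt with h | h
  · simpa [← h] using continuousOn_const
  · exact continuousOn_const.div (by fun_prop) fun C (hC : 0 ≤ C) => by positivity

end PenaltyNormSq

theorem mPower_RLSR_F_unique_root_general
    (n : ℕ) (hn : 0 < n)
    (d : Fin n → ℝ)
    (lam m : ℝ) (hlam : 0 < lam) (hm : 1 < m)
    (hd : ∀ i, 0 ≤ d i)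
    (y' : Fin n → ℝ)
    (hpos : 0 < ∑ i, d i * (y' i) ^ 2)
    (F : ℝ → ℝ)
    (hF : ∀ C, F C = (∑ i, 4 * d i * (y' i) ^ 2 / (2 * d i + lam * m * n * C) ^ 2) ^ (m / 2 - 1) - C) :
    (∃! C₀ : ℝ, C₀ ∈ Set.Ioi (0 : ℝ) ∧ F C₀ = 0) ∧
    (∀ᶠ C in 𝓝[>] (0 : ℝ), 0 < F C) ∧
    Tendsto F atTop atBot := by
  have hc : 0 < lam * m * n := by
    have : (0 : ℝ) < n := Nat.cast_pos.2 hn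
    have : 0 < m := by linarith
    positivity
  have he : -1 / 2 < m / 2 - 1 := by linarith
  obtain rfl : F = fun C => penaltyNormSq d y' (lam * m * n) C ^ (m / 2 - 1) - C := funext hF
  have hS : ∀ C ∈ Ici (0 : ℝ), 0 < penaltyNormSq d y' (lam * m * n) C :=
    fun C hC => penaltyNormSq_pos hd hc.le hpos hC
  have hS' : ∀ C ∈ Ioi (0 : ℝ), 0 < penaltyNormSq d y' (lam * m * n) C :=
    fun C hC => hS C (Ioi_subset_Ici_self hC)
  have hcont := continuousOn_penaltyNormSq (y := y') hd hc.le
  have hanti := antitoneOn_penaltyNormSq (y := y') hd hc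
  have hmono := monotoneOn_sq_mul_penaltyNormSq (y := y') hd hc
  refine ⟨existsUnique_rpow_sub_self_eq_zero he hcont hS hanti hmono, ?_,
    tendsto_rpow_sub_self_atBot he hS' hanti hmono⟩
  exact (tendsto_rpow_sub_self_nhdsGT ((hcont 0 self_mem_Ici).mono Ioi_subset_Ici_self)
    (hS 0 self_mem_Ici)).eventually
      (eventually_gt_nhds (Real.rpow_pos_of_pos (hS 0 self_mem_Ici) _))

/-- The function `F(C) = (∑ i, 4 d i (y' i)²/(2 d i + λ m n C)²)^{m/2 − 1} − C` has exactly
one root in `(0, ∞)`; moreover `F` is positive near `0` (from the right) and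
`F(C) → −∞` as `C → ∞`. -/
theorem mPower_RLSR_F_unique_root
    (n : ℕ) (hn : 0 < n)
    (K Q : Matrix (Fin n) (Fin n) ℝ) (d : Fin n → ℝ) (Y : Fin n → ℝ)
    (lam m : ℝ) (hlam : 0 < lam) (hm : 1 < m)
    (hQ : Qᵀ * Q = 1) (hK : K = Q * Matrix.diagonal d * Qᵀ) (hd : ∀ i, 0 ≤ d i)
    (y' : Fin n → ℝ) (hy' : y' = Qᵀ.mulVec Y)
    (hpos : 0 < ∑ i, d i * (y' i) ^ 2)
    (F : ℝ → ℝ)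
    (hF : ∀ C, F C = (∑ i, 4 * d i * (y' i) ^ 2 / (2 * d i + lam * m * n * C) ^ 2) ^ (m / 2 - 1) - C) :
    (∃! C₀ : ℝ, C₀ ∈ Set.Ioi (0 : ℝ) ∧ F C₀ = 0) ∧
    (∀ᶠ C in 𝓝[>] (0 : ℝ), 0 < F C) ∧
    Tendsto F atTop atBot :=
  mPower_RLSR_F_unique_root_general n hn d lam m hlam hm hd y' hpos F hF
end

section
/- If C_0 > 0 satisfies F(C_0) = 0, then the vector α' ∈ ℝⁿ defined by α'_i = 2·y'_i/(2·d_i + λ·m·n·C_0) satisfies, for every 1 ≤ i ≤ n, the componentwise stationarity system y'_i = d_i·α'_i + λ·(m·n/2)·(∑_{j=1}^n d_j·(α'_j)²)^{m/2 − 1}·α'_i, and moreover C_0 = (∑_{j=1}^n d_j·(α'_j)²)^{m/2 − 1}. -/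
open scoped BigOperators

/-! Substituting `α'_i = 2 y'_i / (2 d_i + λ m n C₀)` turns `∑ d_j α'_j²` into exactly the sum inside `F`,
so `F(C₀) = 0` says `C₀ = (∑ d_j α'_j²)^{m/2 - 1}`; the stationarity equation is then
`α'_i (2 d_i + λ m n C₀) = 2 y'_i` rearranged. -/

section

variable {ι : Type*} [Fintype ι]

theorem sum_mul_sq_two_mul_div_eq (d y D : ι → ℝ) (hD : ∀ i, D i ≠ 0) :
    ∑ i, d i * (2 * y i / D i) ^ 2 = ∑ i, 4 * d i * y i ^ 2 / D i ^ 2 :=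
  Finset.sum_congr rfl fun i _ => by field_simp [hD i]; ring

end

theorem eq_mul_add_half_mul_of_eq_two_mul_div {d y a c : ℝ} (hD : 2 * d + c ≠ 0)
    (ha : a = 2 * y / (2 * d + c)) : y = d * a + c / 2 * a := by
  rw [ha, ← add_mul, mul_div_assoc', eq_div_iff hD]; ring

theorem mPower_RLSR_root_gives_stationarity_general
    (n : ℕ)
    (lam m : ℝ) (hlam : 0 < lam) (hm : 1 < m)
    (d : Fin n → ℝ) (hd : ∀ i, 0 ≤ d i)
    (y' : Fin n → ℝ)
    (C₀ : ℝ) (hC₀ : 0 < C₀)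
    (hroot : (∑ i, 4 * d i * (y' i) ^ 2 / (2 * d i + lam * m * n * C₀) ^ 2) ^ (m / 2 - 1) - C₀ = 0)
    (α' : Fin n → ℝ) (hα' : ∀ i, α' i = 2 * y' i / (2 * d i + lam * m * n * C₀)) :
    (∀ i, y' i = d i * α' i +
        lam * (m * n / 2) * (∑ j, d j * (α' j) ^ 2) ^ (m / 2 - 1) * α' i) ∧
    C₀ = (∑ j, d j * (α' j) ^ 2) ^ (m / 2 - 1) := by
  have hden : ∀ i : Fin n, 2 * d i + lam * m * n * C₀ ≠ 0 := fun i => by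
    have hn : (0 : ℝ) < n := Nat.cast_pos.mpr i.pos
    have hreg : 0 < lam * m * n * C₀ :=
      mul_pos (mul_pos (mul_pos hlam (by linarith)) hn) hC₀
    linarith [hd i]
  have hC : C₀ = (∑ j, d j * (α' j) ^ 2) ^ (m / 2 - 1) := by
    simp only [hα']
    rw [sum_mul_sq_two_mul_div_eq d y' _ hden]
    linarith
  refine ⟨fun i => ?_, hC⟩
  rw [← hC]
  linear_combination eq_mul_add_half_mul_of_eq_two_mul_div (hden i) (hα' i)

/-- If `C₀ > 0` is a root of `F`, then `α'` defined by
`α' i = 2 y' i / (2 d i + λ m n C₀)` satisfies the componentwise stationarity system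
`y' i = d i α' i + λ (m n / 2) (∑ j, d j (α' j)²)^{m/2 − 1} α' i` for every `i`,
and moreover `C₀ = (∑ j, d j (α' j)²)^{m/2 − 1}`. -/
theorem mPower_RLSR_root_gives_stationarity
    (n : ℕ) (hn : 0 < n)
    (lam m : ℝ) (hlam : 0 < lam) (hm : 1 < m)
    (d : Fin n → ℝ) (hd : ∀ i, 0 ≤ d i)
    (y' : Fin n → ℝ) (hpos : 0 < ∑ i, d i * (y' i) ^ 2)
    (C₀ : ℝ) (hC₀ : 0 < C₀)
    (hroot : (∑ i, 4 * d i * (y' i) ^ 2 / (2 * d i + lam * m * n * C₀) ^ 2) ^ (m / 2 - 1) - C₀ = 0)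
    (α' : Fin n → ℝ) (hα' : ∀ i, α' i = 2 * y' i / (2 * d i + lam * m * n * C₀)) :
    (∀ i, y' i = d i * α' i +
        lam * (m * n / 2) * (∑ j, d j * (α' j) ^ 2) ^ (m / 2 - 1) * α' i) ∧
    C₀ = (∑ j, d j * (α' j) ^ 2) ^ (m / 2 - 1) :=
  mPower_RLSR_root_gives_stationarity_general n lam m hlam hm d hd y' C₀ hC₀ hroot α' hα'
end

section
/- (Z-equivalence lemma) Let m > 1 and λ > 0, and let f_0 be the unique minimizer over H of the m-power regularized least squares objective J(f) = (1/n)·∑_{i=1}^n (y_i − ⟨φ_i, f⟩)² + λ·‖f‖^m. If f_0 ≠ 0, set λ_2 = (m/2)·λ·‖f_0‖^{m−2}. Then f_0 is also the unique minimizer over H of the kernel ridge regression objective f ↦ (1/n)·∑_{i=1}^n (y_i − ⟨φ_i, f⟩)² + λ_2·‖f‖². -/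
open scoped RealInnerProductSpace

/-!
The data-fit term is a convex quadratic in `f`, and `‖·‖ ^ m` (for `m > 1`) is differentiable
with gradient `m ‖f‖ ^ (m - 2) f`, which is also the gradient of `(m / 2) ‖f₀‖ ^ (m - 2) ‖f‖ ^ 2`
at `f = f₀`. Hence the minimizer `f₀` of the `m`-power objective is a critical point of the
ridge objective with `λ₂ = (m / 2) λ ‖f₀‖ ^ (m - 2)`. Since `f₀ ≠ 0` gives `λ₂ > 0`, the ridge
objective is strictly convex, so its critical point is its unique minimizer.
-/

section LeastSquares

variable {ι E : Type*} [Fintype ι] [NormedAddCommGroup E] [InnerProductSpace ℝ E]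

def sumSqResidual (φ : ι → E) (y : ι → ℝ) (f : E) : ℝ :=
  ∑ i, (y i - ⟪φ i, f⟫) ^ 2

noncomputable def sumSqResidualFDeriv (φ : ι → E) (y : ι → ℝ) (f : E) : E →L[ℝ] ℝ :=
  ∑ i, (-2 * (y i - ⟪φ i, f⟫)) • innerSL ℝ (φ i)

theorem sumSqResidualFDeriv_apply (φ : ι → E) (y : ι → ℝ) (f v : E) :
    sumSqResidualFDeriv φ y f v = ∑ i, -2 * (y i - ⟪φ i, f⟫) * ⟪φ i, v⟫ := by
  simp [sumSqResidualFDeriv]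

theorem sumSqResidual_add (φ : ι → E) (y : ι → ℝ) (f v : E) :
    sumSqResidual φ y (f + v) =
      sumSqResidual φ y f + sumSqResidualFDeriv φ y f v + ∑ i, ⟪φ i, v⟫ ^ 2 := by
  simp only [sumSqResidual, sumSqResidualFDeriv_apply, ← Finset.sum_add_distrib, inner_add_right]
  exact Finset.sum_congr rfl fun i _ => by ring

theorem hasFDerivAt_sumSqResidual (φ : ι → E) (y : ι → ℝ) (f : E) :
    HasFDerivAt (sumSqResidual φ y) (sumSqResidualFDeriv φ y f) f := by
  refine HasFDerivAt.fun_sum fun i _ => ?_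
  refine ((((innerSL ℝ (φ i)).hasFDerivAt (x := f)).const_sub (y i)).pow 2).congr_fderiv ?_
  ext v
  simp

theorem sumSqResidualFDeriv_add_smul_innerSL_eq_zero_of_isMin {c lam m : ℝ} (hm : 1 < m)
    {φ : ι → E} {y : ι → ℝ} {f : E}
    (hmin : ∀ g, c * sumSqResidual φ y f + lam * ‖f‖ ^ m ≤ c * sumSqResidual φ y g + lam * ‖g‖ ^ m) :
    c • sumSqResidualFDeriv φ y f + (lam * (m * ‖f‖ ^ (m - 2))) • innerSL ℝ f = 0 := by
  have hderiv := ((hasFDerivAt_sumSqResidual φ y f).const_mul c).add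
    ((hasFDerivAt_norm_rpow f hm).const_mul lam)
  rw [smul_smul] at hderiv
  exact IsLocalMin.hasFDerivAt_eq_zero (Filter.Eventually.of_forall hmin) hderiv

theorem sumSqResidual_add_norm_sq_lt_of_fderiv_eq_zero {c lam : ℝ} (hc : 0 ≤ c) (hlam : 0 < lam)
    {φ : ι → E} {y : ι → ℝ} {f g : E} (hgf : g ≠ f)
    (hcrit : c • sumSqResidualFDeriv φ y f + (2 * lam) • innerSL ℝ f = 0) :
    c * sumSqResidual φ y f + lam * ‖f‖ ^ 2 < c * sumSqResidual φ y g + lam * ‖g‖ ^ 2 := by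
  obtain ⟨v, rfl⟩ : ∃ v, g = f + v := ⟨g - f, by abel⟩
  have hv : v ≠ 0 := by rintro rfl; simp at hgf
  have hcrit_v : c * sumSqResidualFDeriv φ y f v + 2 * lam * ⟪f, v⟫ = 0 := by
    simpa using congrArg (fun L : E →L[ℝ] ℝ => L v) hcrit
  have hquad : 0 ≤ c * ∑ i, ⟪φ i, v⟫ ^ 2 := by positivity
  have hnorm : 0 < lam * ‖v‖ ^ 2 := by positivity
  rw [sumSqResidual_add, norm_add_sq_real]
  linear_combination -hcrit_v + hquad + hnorm

end LeastSquares

theorem mPower_RLSR_Z_equivalence_general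
    {H : Type*} [NormedAddCommGroup H] [InnerProductSpace ℝ H]
    (n : ℕ) (φ : Fin n → H) (y : Fin n → ℝ)
    (lam m : ℝ) (hlam : 0 < lam) (hm : 1 < m)
    (f₀ : H) (hne : f₀ ≠ 0)
    (hmin : ∀ g : H,
      (1 / (n : ℝ)) * ∑ i, (y i - ⟪φ i, f₀⟫) ^ 2 + lam * ‖f₀‖ ^ m ≤
      (1 / (n : ℝ)) * ∑ i, (y i - ⟪φ i, g⟫) ^ 2 + lam * ‖g‖ ^ m)
    (lam₂ : ℝ) (hlam₂ : lam₂ = (m / 2) * lam * ‖f₀‖ ^ (m - 2)) :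
    ∀ g : H, g ≠ f₀ →
      (1 / (n : ℝ)) * ∑ i, (y i - ⟪φ i, f₀⟫) ^ 2 + lam₂ * ‖f₀‖ ^ 2 <
      (1 / (n : ℝ)) * ∑ i, (y i - ⟪φ i, g⟫) ^ 2 + lam₂ * ‖g‖ ^ 2 := by
  have hcrit := sumSqResidualFDeriv_add_smul_innerSL_eq_zero_of_isMin (φ := φ) (y := y) hm hmin
  have hlam₂_pos : 0 < lam₂ := by
    have := norm_pos_iff.mpr hne
    rw [hlam₂]
    positivity
  intro g hg
  refine sumSqResidual_add_norm_sq_lt_of_fderiv_eq_zero (by positivity) hlam₂_pos hg ?_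
  rw [hlam₂]
  convert hcrit using 3
  ring

/-- Z-equivalence lemma: for `m > 1`, `λ > 0`, if `f₀` is the unique minimizer of the
m-power regularized least squares objective and `f₀ ≠ 0`, then with
`λ₂ = (m/2)·λ·‖f₀‖^{m−2}`, `f₀` is also the unique minimizer of the kernel ridge
regression objective `f ↦ (1/n)·∑ (y i − ⟪φ i, f⟫)² + λ₂·‖f‖²`. -/
theorem mPower_RLSR_Z_equivalence
    {H : Type*} [NormedAddCommGroup H] [InnerProductSpace ℝ H] [CompleteSpace H]
    (n : ℕ) (hn : 0 < n) (φ : Fin n → H) (y : Fin n → ℝ)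
    (lam m : ℝ) (hlam : 0 < lam) (hm : 1 < m)
    (f₀ : H) (hne : f₀ ≠ 0)
    (hmin : ∀ g : H,
      (1 / (n : ℝ)) * ∑ i, (y i - ⟪φ i, f₀⟫) ^ 2 + lam * ‖f₀‖ ^ m ≤
      (1 / (n : ℝ)) * ∑ i, (y i - ⟪φ i, g⟫) ^ 2 + lam * ‖g‖ ^ m)
    (lam₂ : ℝ) (hlam₂ : lam₂ = (m / 2) * lam * ‖f₀‖ ^ (m - 2)) :
    ∀ g : H, g ≠ f₀ →
      (1 / (n : ℝ)) * ∑ i, (y i - ⟪φ i, f₀⟫) ^ 2 + lam₂ * ‖f₀‖ ^ 2 <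
      (1 / (n : ℝ)) * ∑ i, (y i - ⟪φ i, g⟫) ^ 2 + lam₂ * ‖g‖ ^ 2 :=
  mPower_RLSR_Z_equivalence_general n φ y lam m hlam hm f₀ hne hmin lam₂ hlam₂
end

section
/- (Theorem 2, β-stability) Assume m ≥ 2, |y_j| ≤ C_y and ‖φ_j‖ ≤ κ for all 1 ≤ j ≤ n, and set C = 2·(C_y + κ·(C_y²/λ)^{1/m}) and β = C·κ·(2^{m−2}·C·κ/(λ·n))^{1/(m−1)}. Then for every φ ∈ H with ‖φ‖ ≤ κ and every y ∈ ℝ with |y| ≤ C_y, one has |(y − ⟨φ, f_Z⟩)² − (y − ⟨φ, f_{Z^i}⟩)²| ≤ β; that is, the m-power regularized least squares algorithm is β uniformly stable. -/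
open scoped RealInnerProductSpace BigOperators

/-!
Let `f_mid = (f_Z + f_{Z^i}) / 2`. The squared loss is convex and, for `m ≥ 2`, Clarkson's
inequality makes `‖·‖^m` uniformly convex, so adding the minimality of `f_Z` and of `f_{Z^i}`, both
tested at `f_mid`, leaves `2λ (‖f_Z - f_{Z^i}‖ / 2)^m ≤ (ℓ_i(f_mid) - ℓ_i(f_Z)) / n`, where `ℓ_i` is
the loss at the left-out point. Comparing with `f = 0` puts both minimizers in the ball of radius
`(C_y² / λ)^{1/m}`, on which every loss `(y - ⟪φ, ·⟫)²` with `‖φ‖ ≤ κ`, `|y| ≤ C_y` is `Cκ`-Lipschitz.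
Hence `‖f_Z - f_{Z^i}‖^{m-1} ≤ 2^{m-2} C κ / (λ n)`, and the loss difference is at most
`C κ ‖f_Z - f_{Z^i}‖ ≤ β`.
-/

theorem rpow_add_div_two_le {a b p : ℝ} (ha : 0 ≤ a) (hb : 0 ≤ b) (hp : 1 ≤ p) :
    ((a + b) / 2) ^ p ≤ (a ^ p + b ^ p) / 2 := by
  have h := (convexOn_rpow hp).2 (Set.mem_Ici.2 ha) (Set.mem_Ici.2 hb)
    (by norm_num : (0 : ℝ) ≤ 1 / 2) (by norm_num : (0 : ℝ) ≤ 1 / 2) (by norm_num)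
  simp only [smul_eq_mul] at h
  calc ((a + b) / 2) ^ p = (1 / 2 * a + 1 / 2 * b) ^ p := by ring_nf
    _ ≤ 1 / 2 * a ^ p + 1 / 2 * b ^ p := h
    _ = (a ^ p + b ^ p) / 2 := by ring

theorem half_norm_add_rpow_add_half_norm_sub_rpow_le {E : Type*} [NormedAddCommGroup E]
    [InnerProductSpace ℝ E] (f g : E) {m : ℝ} (hm : 2 ≤ m) :
    (‖f + g‖ / 2) ^ m + (‖f - g‖ / 2) ^ m ≤ (‖f‖ ^ m + ‖g‖ ^ m) / 2 := by
  have hp : 1 ≤ m / 2 := by linarith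
  have hsq : ∀ t : ℝ, 0 ≤ t → t ^ m = (t ^ 2) ^ (m / 2) := fun t ht => by
    rw [← Real.rpow_natCast, ← Real.rpow_mul ht]; ring_nf
  have hpar : (‖f + g‖ / 2) ^ 2 + (‖f - g‖ / 2) ^ 2 = (‖f‖ ^ 2 + ‖g‖ ^ 2) / 2 := by
    linarith [parallelogram_law_with_norm ℝ f g]
  simp only [hsq _ (norm_nonneg _), hsq _ (div_nonneg (norm_nonneg _) zero_le_two)]
  calc ((‖f + g‖ / 2) ^ 2) ^ (m / 2) + ((‖f - g‖ / 2) ^ 2) ^ (m / 2)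
      ≤ ((‖f + g‖ / 2) ^ 2 + (‖f - g‖ / 2) ^ 2) ^ (m / 2) :=
        Real.add_rpow_le_rpow_add (by positivity) (by positivity) hp
    _ = ((‖f‖ ^ 2 + ‖g‖ ^ 2) / 2) ^ (m / 2) := by rw [hpar]
    _ ≤ ((‖f‖ ^ 2) ^ (m / 2) + (‖g‖ ^ 2) ^ (m / 2)) / 2 :=
        rpow_add_div_two_le (by positivity) (by positivity) hp

theorem le_rpow_of_two_mul_half_rpow_le {δ m lam a : ℝ} (hδ : 0 ≤ δ) (hm : 1 < m)
    (hlam : 0 < lam) (ha : 0 ≤ a) (h : 2 * lam * (δ / 2) ^ m ≤ a * (δ / 2)) :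
    δ ≤ (2 ^ (m - 2) * a / lam) ^ (1 / (m - 1)) := by
  rcases hδ.eq_or_lt with rfl | hδ_pos
  · positivity
  have hhalf : 0 < δ / 2 := by positivity
  have hdiv : 2 * lam * (δ / 2) ^ (m - 1) ≤ a := by
    refine le_of_mul_le_mul_right ?_ hhalf
    rwa [mul_assoc, ← Real.rpow_add_one hhalf.ne', sub_add_cancel]
  have hpow : δ ^ (m - 1) ≤ 2 ^ (m - 2) * a / lam := by
    have hsplit : δ ^ (m - 1) = 2 ^ (m - 2) * (2 * (δ / 2) ^ (m - 1)) := by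
      rw [← mul_assoc, ← Real.rpow_add_one two_ne_zero, show m - 2 + 1 = m - 1 by ring,
        ← Real.mul_rpow zero_le_two hhalf.le, mul_div_cancel₀ _ two_ne_zero]
    rw [hsplit, le_div_iff₀ hlam, mul_assoc]
    gcongr
    linarith
  rwa [one_div, Real.le_rpow_inv_iff_of_pos hδ (by positivity) (by linarith)]

theorem abs_sq_sub_inner_sub_sq_sub_inner_le {E : Type*} [NormedAddCommGroup E]
    [InnerProductSpace ℝ E] {ψ f₁ f₂ : E} {y₀ Cy κ R : ℝ} (hψ : ‖ψ‖ ≤ κ) (hy₀ : |y₀| ≤ Cy)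
    (hf₁ : ‖f₁‖ ≤ R) (hf₂ : ‖f₂‖ ≤ R) :
    |(y₀ - ⟪ψ, f₁⟫) ^ 2 - (y₀ - ⟪ψ, f₂⟫) ^ 2| ≤ 2 * (Cy + κ * R) * κ * ‖f₁ - f₂‖ := by
  have hκ : 0 ≤ κ := (norm_nonneg ψ).trans hψ
  have hinner : ∀ f : E, |⟪ψ, f⟫| ≤ κ * ‖f‖ := fun f =>
    (abs_real_inner_le_norm ψ f).trans (by gcongr)
  have hsum : |2 * y₀ - ⟪ψ, f₁⟫ - ⟪ψ, f₂⟫| ≤ 2 * (Cy + κ * R) := by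
    have h₁ := abs_le.1 ((hinner f₁).trans (by gcongr : κ * ‖f₁‖ ≤ κ * R))
    have h₂ := abs_le.1 ((hinner f₂).trans (by gcongr : κ * ‖f₂‖ ≤ κ * R))
    have h₀ := abs_le.1 hy₀
    rw [abs_le]
    constructor <;> linarith
  calc |(y₀ - ⟪ψ, f₁⟫) ^ 2 - (y₀ - ⟪ψ, f₂⟫) ^ 2|
      = |⟪ψ, f₁ - f₂⟫| * |2 * y₀ - ⟪ψ, f₁⟫ - ⟪ψ, f₂⟫| := by
        rw [inner_sub_right, ← abs_mul, ← abs_neg]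
        congr 1
        ring
    _ ≤ κ * ‖f₁ - f₂‖ * (2 * (Cy + κ * R)) :=
        mul_le_mul (hinner _) hsum (abs_nonneg _) (by positivity)
    _ = 2 * (Cy + κ * R) * κ * ‖f₁ - f₂‖ := by ring

theorem one_div_mul_sum_sq_le {n : ℕ} (hn : 0 < n) {y : Fin n → ℝ} {Cy : ℝ}
    (hy : ∀ j, |y j| ≤ Cy) (s : Finset (Fin n)) :
    1 / (n : ℝ) * ∑ j ∈ s, y j ^ 2 ≤ Cy ^ 2 := by
  have hsq : ∀ j, y j ^ 2 ≤ Cy ^ 2 := fun j => sq_le_sq.2 ((hy j).trans (le_abs_self Cy))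
  calc 1 / (n : ℝ) * ∑ j ∈ s, y j ^ 2 ≤ 1 / (n : ℝ) * ∑ _j : Fin n, Cy ^ 2 := by
        gcongr
        exact (Finset.sum_le_sum_of_subset_of_nonneg s.subset_univ fun j _ _ => sq_nonneg _).trans
          (Finset.sum_le_sum fun j _ => hsq j)
    _ = Cy ^ 2 := by
        rw [Finset.sum_const, Finset.card_univ, Fintype.card_fin, nsmul_eq_mul]
        field_simp

section PowerRLS

variable {ι E : Type*} [NormedAddCommGroup E] [InnerProductSpace ℝ E]

/-- The `m`-power regularized least squares objective; `w` plays the role of `1 / n`, also for the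
leave-one-out objective, which sums over `s.erase i`. -/
noncomputable def powerRLS (s : Finset ι) (φ : ι → E) (y : ι → ℝ) (w lam m : ℝ) (f : E) : ℝ :=
  w * ∑ j ∈ s, (y j - ⟪φ j, f⟫) ^ 2 + lam * ‖f‖ ^ m

variable {s : Finset ι} {φ : ι → E} {y : ι → ℝ} {w lam m : ℝ}

theorem powerRLS_eq_add_erase [DecidableEq ι] {i : ι} (hi : i ∈ s) (f : E) :
    powerRLS s φ y w lam m f = w * (y i - ⟪φ i, f⟫) ^ 2 + powerRLS (s.erase i) φ y w lam m f := by
  rw [powerRLS, powerRLS, ← Finset.add_sum_erase s _ hi]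
  ring

theorem norm_le_of_powerRLS_minimizer {f : E} {c : ℝ} (hw : 0 ≤ w) (hlam : 0 < lam) (hm : 0 < m)
    (hy : w * ∑ j ∈ s, y j ^ 2 ≤ c) (hf : ∀ g, powerRLS s φ y w lam m f ≤ powerRLS s φ y w lam m g) :
    ‖f‖ ≤ (c / lam) ^ (1 / m) := by
  have hf0 := hf 0
  simp only [powerRLS, inner_zero_right, sub_zero, norm_zero, Real.zero_rpow hm.ne', mul_zero,
    add_zero] at hf0
  have hloss : 0 ≤ w * ∑ j ∈ s, (y j - ⟪φ j, f⟫) ^ 2 := by positivity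
  have hc : 0 ≤ c / lam := div_nonneg ((by positivity : 0 ≤ w * ∑ j ∈ s, y j ^ 2).trans hy) hlam.le
  rw [one_div, Real.le_rpow_inv_iff_of_pos (norm_nonneg f) hc hm, le_div_iff₀' hlam]
  linarith

theorem two_mul_powerRLS_midpoint_add_le (hw : 0 ≤ w) (hlam : 0 ≤ lam) (hm : 2 ≤ m) (f g : E) :
    2 * powerRLS s φ y w lam m ((1 / 2 : ℝ) • (f + g)) + 2 * lam * (‖f - g‖ / 2) ^ m ≤
      powerRLS s φ y w lam m f + powerRLS s φ y w lam m g := by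
  have hloss : 2 * ∑ j ∈ s, (y j - ⟪φ j, (1 / 2 : ℝ) • (f + g)⟫) ^ 2 ≤
      ∑ j ∈ s, (y j - ⟪φ j, f⟫) ^ 2 + ∑ j ∈ s, (y j - ⟪φ j, g⟫) ^ 2 := by
    rw [Finset.mul_sum, ← Finset.sum_add_distrib]
    refine Finset.sum_le_sum fun j _ => ?_
    rw [real_inner_smul_right, inner_add_right]
    nlinarith [sq_nonneg (⟪φ j, f⟫ - ⟪φ j, g⟫)]
  have hnorm : ‖(1 / 2 : ℝ) • (f + g)‖ = ‖f + g‖ / 2 := by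
    rw [norm_smul, Real.norm_of_nonneg one_half_pos.le]
    ring
  have hclarkson := half_norm_add_rpow_add_half_norm_sub_rpow_le f g hm
  rw [powerRLS, powerRLS, powerRLS, hnorm]
  linarith [mul_le_mul_of_nonneg_left hloss hw, mul_le_mul_of_nonneg_left hclarkson hlam]

theorem two_mul_half_norm_sub_rpow_le_of_powerRLS_minimizers [DecidableEq ι] {i : ι} (hi : i ∈ s)
    {f f' : E} (hw : 0 ≤ w) (hlam : 0 ≤ lam) (hm : 2 ≤ m)
    (hf : ∀ g, powerRLS s φ y w lam m f ≤ powerRLS s φ y w lam m g)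
    (hf' : ∀ g, powerRLS (s.erase i) φ y w lam m f' ≤ powerRLS (s.erase i) φ y w lam m g) :
    2 * lam * (‖f - f'‖ / 2) ^ m ≤
      w * ((y i - ⟪φ i, (1 / 2 : ℝ) • (f + f')⟫) ^ 2 - (y i - ⟪φ i, f⟫) ^ 2) := by
  have h₁ := hf ((1 / 2 : ℝ) • (f + f'))
  have h₂ := hf' ((1 / 2 : ℝ) • (f + f'))
  have h₃ := two_mul_powerRLS_midpoint_add_le (s := s.erase i) (φ := φ) (y := y) hw hlam hm f f'
  rw [powerRLS_eq_add_erase hi, powerRLS_eq_add_erase hi] at h₁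
  linarith

theorem norm_sub_le_of_powerRLS_minimizers [DecidableEq ι] {i : ι} (hi : i ∈ s) {f f' : E}
    {Cy κ R : ℝ} (hw : 0 ≤ w) (hlam : 0 < lam) (hm : 2 ≤ m)
    (hf : ∀ g, powerRLS s φ y w lam m f ≤ powerRLS s φ y w lam m g)
    (hf' : ∀ g, powerRLS (s.erase i) φ y w lam m f' ≤ powerRLS (s.erase i) φ y w lam m g)
    (hφi : ‖φ i‖ ≤ κ) (hyi : |y i| ≤ Cy) (hfR : ‖f‖ ≤ R) (hf'R : ‖f'‖ ≤ R) :
    ‖f - f'‖ ≤ (2 ^ (m - 2) * (w * (2 * (Cy + κ * R) * κ)) / lam) ^ (1 / (m - 1)) := by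
  have hκ : 0 ≤ κ := (norm_nonneg _).trans hφi
  have hCy : 0 ≤ Cy := (abs_nonneg _).trans hyi
  have hR : 0 ≤ R := (norm_nonneg _).trans hfR
  have hmid : ‖(1 / 2 : ℝ) • (f + f')‖ ≤ R := by
    rw [norm_smul, Real.norm_of_nonneg one_half_pos.le]
    linarith [norm_add_le f f']
  have hmid_sub : ‖(1 / 2 : ℝ) • (f + f') - f‖ = ‖f - f'‖ / 2 := by
    rw [show (1 / 2 : ℝ) • (f + f') - f = (1 / 2 : ℝ) • (f' - f) by module, norm_smul,
      Real.norm_of_nonneg one_half_pos.le, norm_sub_rev]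
    ring
  refine le_rpow_of_two_mul_half_rpow_le (norm_nonneg _) (by linarith) hlam (by positivity) ?_
  calc 2 * lam * (‖f - f'‖ / 2) ^ m
      ≤ w * ((y i - ⟪φ i, (1 / 2 : ℝ) • (f + f')⟫) ^ 2 - (y i - ⟪φ i, f⟫) ^ 2) :=
        two_mul_half_norm_sub_rpow_le_of_powerRLS_minimizers hi hw hlam.le hm hf hf'
    _ ≤ w * (2 * (Cy + κ * R) * κ * ‖(1 / 2 : ℝ) • (f + f') - f‖) := by
        gcongr
        exact (le_abs_self _).trans (abs_sq_sub_inner_sub_sq_sub_inner_le hφi hyi hmid hfR)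
    _ = w * (2 * (Cy + κ * R) * κ) * (‖f - f'‖ / 2) := by rw [hmid_sub]; ring

end PowerRLS

theorem mPower_RLSR_beta_stable_general
    {H : Type*} [NormedAddCommGroup H] [InnerProductSpace ℝ H]
    (n : ℕ) (hn : 0 < n) (φ : Fin n → H) (y : Fin n → ℝ)
    (lam m Cy κ : ℝ) (hlam : 0 < lam) (hm : 2 ≤ m) (hCy : 0 < Cy) (hκ : 0 < κ)
    (hy : ∀ j, |y j| ≤ Cy) (hφ : ∀ j, ‖φ j‖ ≤ κ)
    (i : Fin n) (fZ fZi : H)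
    (hfZ : ∀ g : H,
      (1 / (n : ℝ)) * ∑ j, (y j - ⟪φ j, fZ⟫) ^ 2 + lam * ‖fZ‖ ^ m ≤
      (1 / (n : ℝ)) * ∑ j, (y j - ⟪φ j, g⟫) ^ 2 + lam * ‖g‖ ^ m)
    (hfZi : ∀ g : H,
      (1 / (n : ℝ)) * ∑ j ∈ Finset.univ.erase i, (y j - ⟪φ j, fZi⟫) ^ 2 + lam * ‖fZi‖ ^ m ≤
      (1 / (n : ℝ)) * ∑ j ∈ Finset.univ.erase i, (y j - ⟪φ j, g⟫) ^ 2 + lam * ‖g‖ ^ m)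
    (C β : ℝ) (hC : C = 2 * (Cy + κ * (Cy ^ 2 / lam) ^ (1 / m)))
    (hβ : β = C * κ * ((2 : ℝ) ^ (m - 2) * C * κ / (lam * n)) ^ (1 / (m - 1))) :
    ∀ (φ₀ : H) (y₀ : ℝ), ‖φ₀‖ ≤ κ → |y₀| ≤ Cy →
      |(y₀ - ⟪φ₀, fZ⟫) ^ 2 - (y₀ - ⟪φ₀, fZi⟫) ^ 2| ≤ β := by
  intro φ₀ y₀ hφ₀ hy₀
  have hnorm_le : ∀ {s : Finset (Fin n)} {f : H},
      (∀ g, powerRLS s φ y (1 / n) lam m f ≤ powerRLS s φ y (1 / n) lam m g) →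
        ‖f‖ ≤ (Cy ^ 2 / lam) ^ (1 / m) := fun hf =>
    norm_le_of_powerRLS_minimizer (by positivity) hlam (by linarith)
      (one_div_mul_sum_sq_le hn hy _) hf
  have hfZ_le := hnorm_le hfZ
  have hfZi_le := hnorm_le hfZi
  have hstab := norm_sub_le_of_powerRLS_minimizers (Finset.mem_univ i) (by positivity) hlam hm
    hfZ hfZi (hφ i) (hy i) hfZ_le hfZi_le
  rw [← hC] at hstab
  have hCκ : 0 ≤ C * κ := by rw [hC]; positivity
  calc |(y₀ - ⟪φ₀, fZ⟫) ^ 2 - (y₀ - ⟪φ₀, fZi⟫) ^ 2| ≤ C * κ * ‖fZ - fZi‖ := by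
        rw [hC]; exact abs_sq_sub_inner_sub_sq_sub_inner_le hφ₀ hy₀ hfZ_le hfZi_le
    _ ≤ C * κ * (2 ^ (m - 2) * (1 / n * (C * κ)) / lam) ^ (1 / (m - 1)) :=
        mul_le_mul_of_nonneg_left hstab hCκ
    _ = β := by rw [hβ]; ring_nf

/-- Theorem 2 (β-stability): with `m ≥ 2`, `|y j| ≤ C_y`, `‖φ j‖ ≤ κ`,
`C = 2·(C_y + κ·(C_y²/λ)^{1/m})` and `β = C·κ·(2^{m−2}·C·κ/(λ·n))^{1/(m−1)}`,
for every `φ₀` with `‖φ₀‖ ≤ κ` and every `y₀` with `|y₀| ≤ C_y`, one has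
`|(y₀ − ⟪φ₀, fZ⟫)² − (y₀ − ⟪φ₀, fZi⟫)²| ≤ β`: the m-power regularized least squares
algorithm is `β` uniformly stable. -/
theorem mPower_RLSR_beta_stable
    {H : Type*} [NormedAddCommGroup H] [InnerProductSpace ℝ H] [CompleteSpace H]
    (n : ℕ) (hn : 0 < n) (φ : Fin n → H) (y : Fin n → ℝ)
    (lam m Cy κ : ℝ) (hlam : 0 < lam) (hm : 2 ≤ m) (hCy : 0 < Cy) (hκ : 0 < κ)
    (hy : ∀ j, |y j| ≤ Cy) (hφ : ∀ j, ‖φ j‖ ≤ κ)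
    (i : Fin n) (fZ fZi : H)
    (hfZ : ∀ g : H,
      (1 / (n : ℝ)) * ∑ j, (y j - ⟪φ j, fZ⟫) ^ 2 + lam * ‖fZ‖ ^ m ≤
      (1 / (n : ℝ)) * ∑ j, (y j - ⟪φ j, g⟫) ^ 2 + lam * ‖g‖ ^ m)
    (hfZi : ∀ g : H,
      (1 / (n : ℝ)) * ∑ j ∈ Finset.univ.erase i, (y j - ⟪φ j, fZi⟫) ^ 2 + lam * ‖fZi‖ ^ m ≤
      (1 / (n : ℝ)) * ∑ j ∈ Finset.univ.erase i, (y j - ⟪φ j, g⟫) ^ 2 + lam * ‖g‖ ^ m)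
    (C β : ℝ) (hC : C = 2 * (Cy + κ * (Cy ^ 2 / lam) ^ (1 / m)))
    (hβ : β = C * κ * ((2 : ℝ) ^ (m - 2) * C * κ / (lam * n)) ^ (1 / (m - 1))) :
    ∀ (φ₀ : H) (y₀ : ℝ), ‖φ₀‖ ≤ κ → |y₀| ≤ Cy →
      |(y₀ - ⟪φ₀, fZ⟫) ^ 2 - (y₀ - ⟪φ₀, fZi⟫) ^ 2| ≤ β :=
  mPower_RLSR_beta_stable_general n hn φ y lam m Cy κ hlam hm hCy hκ hy hφ i fZ fZi hfZ hfZi C β hC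
    hβ
end

section
/- In a real inner product space, for every real m ≥ 2 and all vectors u and v, one has ‖u + v‖^m + ‖u − v‖^m ≥ 2·‖u‖^m + 2·‖v‖^m. -/
/-!
With `r = m / 2 ≥ 1`, put `a = ‖u‖²`, `b = ‖v‖²`, `A = ‖u + v‖²`, `B = ‖u - v‖²`, so that
`A + B = 2 (a + b)` by the parallelogram law. Superadditivity and convexity of `t ↦ t ^ r` on
`[0, ∞)` then give `a ^ r + b ^ r ≤ (a + b) ^ r = ((A + B) / 2) ^ r ≤ (A ^ r + B ^ r) / 2`.
-/

open Real

namespace Real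

lemma rpow_eq_sq_rpow_half {a : ℝ} (ha : 0 ≤ a) (p : ℝ) : a ^ p = (a ^ 2) ^ (p / 2) := by
  rw [← rpow_natCast, ← rpow_mul ha]
  ring_nf

lemma midpoint_rpow_le {a b p : ℝ} (ha : 0 ≤ a) (hb : 0 ≤ b) (hp : 1 ≤ p) :
    ((a + b) / 2) ^ p ≤ (a ^ p + b ^ p) / 2 := by
  have h := (convexOn_rpow hp).2 (Set.mem_Ici.mpr ha) (Set.mem_Ici.mpr hb)
    (by norm_num : (0 : ℝ) ≤ 1 / 2) (by norm_num : (0 : ℝ) ≤ 1 / 2) (by norm_num)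
  simp only [smul_eq_mul] at h
  rw [show (a + b) / 2 = 1 / 2 * a + 1 / 2 * b by ring]
  linarith

lemma two_mul_rpow_add_two_mul_rpow_le {a b c d p : ℝ} (ha : 0 ≤ a) (hb : 0 ≤ b)
    (hc : 0 ≤ c) (hd : 0 ≤ d) (hp : 1 ≤ p) (hsum : c + d = 2 * (a + b)) :
    2 * a ^ p + 2 * b ^ p ≤ c ^ p + d ^ p := by
  have hmid : a + b = (c + d) / 2 := by linarith
  calc 2 * a ^ p + 2 * b ^ p = 2 * (a ^ p + b ^ p) := by ring
    _ ≤ 2 * (a + b) ^ p := by gcongr; exact add_rpow_le_rpow_add ha hb hp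
    _ ≤ 2 * ((c ^ p + d ^ p) / 2) := by rw [hmid]; gcongr; exact midpoint_rpow_le hc hd hp
    _ = c ^ p + d ^ p := by ring

end Real

/-- In a real inner product space, for every real `m ≥ 2` and all vectors `u`, `v`,
one has `‖u + v‖^m + ‖u − v‖^m ≥ 2·‖u‖^m + 2·‖v‖^m`. -/
theorem norm_rpow_parallelogram_ineq
    {V : Type*} [NormedAddCommGroup V] [InnerProductSpace ℝ V]
    (m : ℝ) (hm : 2 ≤ m) (u v : V) :
    2 * ‖u‖ ^ m + 2 * ‖v‖ ^ m ≤ ‖u + v‖ ^ m + ‖u - v‖ ^ m := by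
  simp only [rpow_eq_sq_rpow_half (norm_nonneg _) m]
  refine two_mul_rpow_add_two_mul_rpow_le (sq_nonneg _) (sq_nonneg _) (sq_nonneg _)
    (sq_nonneg _) (by linarith) ?_
  simpa only [sq] using parallelogram_law_with_norm ℝ u v
end

section
/- Assume m > 1. Then the midpoint inequality |(y_i − ⟨φ_i, f_Z⟩)² − (y_i − ⟨φ_i, (f_Z + f_{Z^i})/2⟩)²| ≥ n·λ·(‖f_Z‖^m − 2·‖(f_Z + f_{Z^i})/2‖^m + ‖f_{Z^i}‖^m) holds between the minimizers on the full data and on the leave-one-out data. -/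
open scoped RealInnerProductSpace BigOperators

/- Compare both minimizers with the midpoint `z = (f_Z + f_{Z^i})/2`. Adding the two optimality
inequalities at `z`, the leave-one-out loss appears at `f_Z`, at `f_{Z^i}` and twice at `z`; since the
squared loss is convex, these terms cancel in the right direction, leaving only the regularizer's
midpoint gap on one side and the loss on the `i`-th example on the other. -/

theorem two_mul_sq_sub_midpoint_le (y u v : ℝ) :
    2 * (y - (u + v) / 2) ^ 2 ≤ (y - u) ^ 2 + (y - v) ^ 2 := by
  nlinarith [sq_nonneg (u - v)]

theorem two_mul_sum_sq_sub_inner_midpoint_le {ι H : Type*} [NormedAddCommGroup H]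
    [InnerProductSpace ℝ H] (s : Finset ι) (φ : ι → H) (y : ι → ℝ) (f g : H) :
    2 * ∑ j ∈ s, (y j - ⟪φ j, (1 / 2 : ℝ) • (f + g)⟫) ^ 2 ≤
      ∑ j ∈ s, (y j - ⟪φ j, f⟫) ^ 2 + ∑ j ∈ s, (y j - ⟪φ j, g⟫) ^ 2 := by
  rw [Finset.mul_sum, ← Finset.sum_add_distrib]
  refine Finset.sum_le_sum fun j _ => ?_
  rw [real_inner_smul_right, inner_add_right, one_div_mul_eq_div]
  exact two_mul_sq_sub_midpoint_le _ _ _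

theorem regularizer_midpoint_gap_le {X : Type*} (L ℓ R : X → ℝ) {c : ℝ} (hc : 0 ≤ c)
    {a b z : X} (ha : c * (L a + ℓ a) + R a ≤ c * (L z + ℓ z) + R z)
    (hb : c * L b + R b ≤ c * L z + R z) (hz : 2 * L z ≤ L a + L b) :
    R a - 2 * R z + R b ≤ c * (ℓ z - ℓ a) := by
  nlinarith [mul_le_mul_of_nonneg_left hz hc]

theorem mPower_RLSR_midpoint_inequality_general
    {H : Type*} [NormedAddCommGroup H] [InnerProductSpace ℝ H]
    (n : ℕ) (φ : Fin n → H) (y : Fin n → ℝ)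
    (lam m : ℝ)
    (i : Fin n) (fZ fZi : H)
    (hfZ : ∀ g : H,
      (1 / (n : ℝ)) * ∑ j, (y j - ⟪φ j, fZ⟫) ^ 2 + lam * ‖fZ‖ ^ m ≤
      (1 / (n : ℝ)) * ∑ j, (y j - ⟪φ j, g⟫) ^ 2 + lam * ‖g‖ ^ m)
    (hfZi : ∀ g : H,
      (1 / (n : ℝ)) * ∑ j ∈ Finset.univ.erase i, (y j - ⟪φ j, fZi⟫) ^ 2 + lam * ‖fZi‖ ^ m ≤
      (1 / (n : ℝ)) * ∑ j ∈ Finset.univ.erase i, (y j - ⟪φ j, g⟫) ^ 2 + lam * ‖g‖ ^ m) :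
    (n : ℝ) * lam *
        (‖fZ‖ ^ m - 2 * ‖(1 / 2 : ℝ) • (fZ + fZi)‖ ^ m + ‖fZi‖ ^ m) ≤
      |(y i - ⟪φ i, fZ⟫) ^ 2 - (y i - ⟪φ i, (1 / 2 : ℝ) • (fZ + fZi)⟫) ^ 2| := by
  set z : H := (1 / 2 : ℝ) • (fZ + fZi)
  have hn : (0 : ℝ) < n := by exact_mod_cast i.pos
  have hfZ' := hfZ z
  simp only [← Finset.sum_erase_add _ _ (Finset.mem_univ i)] at hfZ'
  have hgap := regularizer_midpoint_gap_le
    (fun f => ∑ j ∈ Finset.univ.erase i, (y j - ⟪φ j, f⟫) ^ 2) (fun f => (y i - ⟪φ i, f⟫) ^ 2)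
    (fun f => lam * ‖f‖ ^ m) (one_div_nonneg.mpr hn.le) hfZ' (hfZi z)
    (two_mul_sum_sq_sub_inner_midpoint_le _ φ y fZ fZi)
  calc (n : ℝ) * lam * (‖fZ‖ ^ m - 2 * ‖z‖ ^ m + ‖fZi‖ ^ m)
      = n * (lam * ‖fZ‖ ^ m - 2 * (lam * ‖z‖ ^ m) + lam * ‖fZi‖ ^ m) := by ring
    _ ≤ n * (1 / n * ((y i - ⟪φ i, z⟫) ^ 2 - (y i - ⟪φ i, fZ⟫) ^ 2)) :=
        mul_le_mul_of_nonneg_left hgap hn.le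
    _ = (y i - ⟪φ i, z⟫) ^ 2 - (y i - ⟪φ i, fZ⟫) ^ 2 := by field_simp
    _ ≤ |(y i - ⟪φ i, fZ⟫) ^ 2 - (y i - ⟪φ i, z⟫) ^ 2| := by
        rw [abs_sub_comm]; exact le_abs_self _

/-- Midpoint inequality: with `m > 1`, the minimizers `fZ` (full data) and `fZi`
(leave-one-out data) satisfy
`|(y i − ⟪φ i, fZ⟫)² − (y i − ⟪φ i, (fZ + fZi)/2⟫)²|
  ≥ n·λ·(‖fZ‖^m − 2·‖(fZ + fZi)/2‖^m + ‖fZi‖^m)`. -/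
theorem mPower_RLSR_midpoint_inequality
    {H : Type*} [NormedAddCommGroup H] [InnerProductSpace ℝ H] [CompleteSpace H]
    (n : ℕ) (hn : 0 < n) (φ : Fin n → H) (y : Fin n → ℝ)
    (lam m : ℝ) (hlam : 0 < lam) (hm : 1 < m)
    (i : Fin n) (fZ fZi : H)
    (hfZ : ∀ g : H,
      (1 / (n : ℝ)) * ∑ j, (y j - ⟪φ j, fZ⟫) ^ 2 + lam * ‖fZ‖ ^ m ≤
      (1 / (n : ℝ)) * ∑ j, (y j - ⟪φ j, g⟫) ^ 2 + lam * ‖g‖ ^ m)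
    (hfZi : ∀ g : H,
      (1 / (n : ℝ)) * ∑ j ∈ Finset.univ.erase i, (y j - ⟪φ j, fZi⟫) ^ 2 + lam * ‖fZi‖ ^ m ≤
      (1 / (n : ℝ)) * ∑ j ∈ Finset.univ.erase i, (y j - ⟪φ j, g⟫) ^ 2 + lam * ‖g‖ ^ m) :
    (n : ℝ) * lam *
        (‖fZ‖ ^ m - 2 * ‖(1 / 2 : ℝ) • (fZ + fZi)‖ ^ m + ‖fZi‖ ^ m) ≤
      |(y i - ⟪φ i, fZ⟫) ^ 2 - (y i - ⟪φ i, (1 / 2 : ℝ) • (fZ + fZi)⟫) ^ 2| :=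
  mPower_RLSR_midpoint_inequality_general n φ y lam m i fZ fZi hfZ hfZi
end

section
/- Assume m > 1. Then for every t ∈ [0, 1], the minimizers f_Z and f_{Z^i} satisfy the combined minimality inequality (y_i − ⟨φ_i, f_Z⟩)² − (y_i − ⟨φ_i, f_Z + t·(f_{Z^i} − f_Z)⟩)² + λ·n·(‖f_Z‖^m − ‖f_Z + t·(f_{Z^i} − f_Z)‖^m + ‖f_{Z^i}‖^m − ‖f_{Z^i} + t·(f_Z − f_{Z^i})‖^m) ≤ 0. -/
/-!
Write `A = f_Z + t (f_{Z^i} - f_Z)` and `B = f_{Z^i} + t (f_Z - f_{Z^i})`. Comparing `f_Z` with `A`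
in the full objective and `f_{Z^i}` with `B` in the leave-one-out objective, and adding, leaves the
claimed expression bounded by the change of the leave-one-out loss `∑_{j ≠ i} (y_j - ⟪φ_j, ·⟫)²`
when `(f_Z, f_{Z^i})` is replaced by `(A, B)`. That change is nonpositive because the loss is convex
and `A`, `B` are the two mirror-image convex combinations of `f_Z` and `f_{Z^i}`.
-/

open scoped RealInnerProductSpace BigOperators
open Set

theorem ConvexOn.map_add_smul_sub_add_map_add_smul_sub_le {𝕜 E β : Type*} [Ring 𝕜]
    [PartialOrder 𝕜] [IsOrderedRing 𝕜] [AddCommGroup E] [Module 𝕜 E]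
    [AddCommGroup β] [PartialOrder β] [IsOrderedAddMonoid β] [Module 𝕜 β]
    {s : Set E} {f : E → β} (hf : ConvexOn 𝕜 s f) {a b : E} (ha : a ∈ s) (hb : b ∈ s)
    {t : 𝕜} (ht : t ∈ Icc 0 1) :
    f (a + t • (b - a)) + f (b + t • (a - b)) ≤ f a + f b := by
  obtain ⟨ht0, ht1⟩ := ht
  have hA : a + t • (b - a) = (1 - t) • a + t • b := by
    rw [smul_sub, sub_smul, one_smul]; abel
  have hB : b + t • (a - b) = t • a + (1 - t) • b := by
    rw [smul_sub, sub_smul, one_smul]; abel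
  calc f (a + t • (b - a)) + f (b + t • (a - b))
      ≤ ((1 - t) • f a + t • f b) + (t • f a + (1 - t) • f b) := by
        rw [hA, hB]
        exact add_le_add (hf.2 ha hb (sub_nonneg.2 ht1) ht0 (sub_add_cancel 1 t))
          (hf.2 ha hb ht0 (sub_nonneg.2 ht1) (add_sub_cancel t 1))
    _ = f a + f b := by
        rw [sub_smul, sub_smul, one_smul, one_smul]; abel

theorem add_mul_le_add_mul_of_one_div_mul_add_le {c a b a' b' : ℝ} (hc : 0 < c)
    (h : 1 / c * a + b ≤ 1 / c * a' + b') : a + b * c ≤ a' + b' * c := by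
  have := mul_le_mul_of_nonneg_right h hc.le
  field_simp at this
  linarith

section InnerProductSpace

variable {H : Type*} [NormedAddCommGroup H] [InnerProductSpace ℝ H]

theorem convexOn_sq_sub_inner (c : ℝ) (v : H) : ConvexOn ℝ univ fun g : H ↦ (c - ⟪v, g⟫) ^ 2 :=
  (even_two.convexOn_pow (𝕜 := ℝ)).comp_affineMap
    (AffineMap.const ℝ H c - (innerₛₗ ℝ v).toAffineMap)

theorem sum_sq_sub_inner_add_smul_sub_add_le {ι : Type*} (s : Finset ι) (φ : ι → H) (y : ι → ℝ)
    (a b : H) {t : ℝ} (ht : t ∈ Icc 0 1) :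
    ∑ j ∈ s, (y j - ⟪φ j, a + t • (b - a)⟫) ^ 2 + ∑ j ∈ s, (y j - ⟪φ j, b + t • (a - b)⟫) ^ 2 ≤
      ∑ j ∈ s, (y j - ⟪φ j, a⟫) ^ 2 + ∑ j ∈ s, (y j - ⟪φ j, b⟫) ^ 2 := by
  rw [← Finset.sum_add_distrib, ← Finset.sum_add_distrib]
  exact Finset.sum_le_sum fun j _ ↦
    (convexOn_sq_sub_inner (y j) (φ j)).map_add_smul_sub_add_map_add_smul_sub_le
      (mem_univ a) (mem_univ b) ht

end InnerProductSpace

theorem mPower_RLSR_combined_minimality_general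
    {H : Type*} [NormedAddCommGroup H] [InnerProductSpace ℝ H]
    (n : ℕ) (φ : Fin n → H) (y : Fin n → ℝ)
    (lam m : ℝ)
    (i : Fin n) (fZ fZi : H)
    (hfZ : ∀ g : H,
      (1 / (n : ℝ)) * ∑ j, (y j - ⟪φ j, fZ⟫) ^ 2 + lam * ‖fZ‖ ^ m ≤
      (1 / (n : ℝ)) * ∑ j, (y j - ⟪φ j, g⟫) ^ 2 + lam * ‖g‖ ^ m)
    (hfZi : ∀ g : H,
      (1 / (n : ℝ)) * ∑ j ∈ Finset.univ.erase i, (y j - ⟪φ j, fZi⟫) ^ 2 + lam * ‖fZi‖ ^ m ≤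
      (1 / (n : ℝ)) * ∑ j ∈ Finset.univ.erase i, (y j - ⟪φ j, g⟫) ^ 2 + lam * ‖g‖ ^ m) :
    ∀ t ∈ Set.Icc (0 : ℝ) 1,
      (y i - ⟪φ i, fZ⟫) ^ 2 - (y i - ⟪φ i, fZ + t • (fZi - fZ)⟫) ^ 2 +
        lam * n * (‖fZ‖ ^ m - ‖fZ + t • (fZi - fZ)‖ ^ m +
          ‖fZi‖ ^ m - ‖fZi + t • (fZ - fZi)‖ ^ m) ≤ 0 := by
  intro t ht
  have hn : (0 : ℝ) < n := Nat.cast_pos.2 i.pos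
  have hfull := add_mul_le_add_mul_of_one_div_mul_add_le hn (hfZ (fZ + t • (fZi - fZ)))
  have hloo := add_mul_le_add_mul_of_one_div_mul_add_le hn (hfZi (fZi + t • (fZ - fZi)))
  rw [← Finset.add_sum_erase _ _ (Finset.mem_univ i),
    ← Finset.add_sum_erase _ _ (Finset.mem_univ i)] at hfull
  linear_combination hfull + hloo +
    sum_sq_sub_inner_add_smul_sub_add_le (Finset.univ.erase i) φ y fZ fZi ht

/-- Combined minimality inequality: with `m > 1`, for every `t ∈ [0, 1]`, the minimizers
`fZ` (full data) and `fZi` (leave-one-out data) satisfy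
`(y i − ⟪φ i, fZ⟫)² − (y i − ⟪φ i, fZ + t(fZi − fZ)⟫)²
 + λ n (‖fZ‖^m − ‖fZ + t(fZi − fZ)‖^m + ‖fZi‖^m − ‖fZi + t(fZ − fZi)‖^m) ≤ 0`. -/
theorem mPower_RLSR_combined_minimality
    {H : Type*} [NormedAddCommGroup H] [InnerProductSpace ℝ H] [CompleteSpace H]
    (n : ℕ) (hn : 0 < n) (φ : Fin n → H) (y : Fin n → ℝ)
    (lam m : ℝ) (hlam : 0 < lam) (hm : 1 < m)
    (i : Fin n) (fZ fZi : H)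
    (hfZ : ∀ g : H,
      (1 / (n : ℝ)) * ∑ j, (y j - ⟪φ j, fZ⟫) ^ 2 + lam * ‖fZ‖ ^ m ≤
      (1 / (n : ℝ)) * ∑ j, (y j - ⟪φ j, g⟫) ^ 2 + lam * ‖g‖ ^ m)
    (hfZi : ∀ g : H,
      (1 / (n : ℝ)) * ∑ j ∈ Finset.univ.erase i, (y j - ⟪φ j, fZi⟫) ^ 2 + lam * ‖fZi‖ ^ m ≤
      (1 / (n : ℝ)) * ∑ j ∈ Finset.univ.erase i, (y j - ⟪φ j, g⟫) ^ 2 + lam * ‖g‖ ^ m) :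
    ∀ t ∈ Set.Icc (0 : ℝ) 1,
      (y i - ⟪φ i, fZ⟫) ^ 2 - (y i - ⟪φ i, fZ + t • (fZi - fZ)⟫) ^ 2 +
        lam * n * (‖fZ‖ ^ m - ‖fZ + t • (fZi - fZ)‖ ^ m +
          ‖fZi‖ ^ m - ‖fZi + t • (fZ - fZi)‖ ^ m) ≤ 0 :=
  mPower_RLSR_combined_minimality_general n φ y lam m i fZ fZi hfZ hfZi
end
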